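/- arXiv:1404.1182 — 7 statements merged into one kernel-verified Lean document; each statement's English description precedes it below -/
import Mathlib

section
/- There exists n₀ such that for every n ≥ n₀ and every integer δ ≥ 1 the following holds: any simple graph G on n vertices with more than C(n−1,2) + δ − 1 edges contains, as a subgraph, every simple graph H on n vertices with no isolated vertices, minimum degree δ(H) ≤ δ, and maximum degree Δ(H) ≤ √n/200 (i.e., G is universal for this class of graphs). -/
/-- `G` contains a copy of `H`, i.e. a subgraph isomorphic to `H`: there is an
injection of the vertices of `H` into the vertices of `G` mapping edges to edges. -/
def ContainsCopy {α β : Type*} (G : SimpleGraph α) (H : SimpleGraph β) : Prop :=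
  ∃ f : β → α, Function.Injective f ∧ ∀ u v : β, H.Adj u v → G.Adj (f u) (f v)

/-!
Let `M = Gᶜ` and `D = Δ(H)`, so that `M` has at most `n - 1 - δ` edges and `n ≥ 40000 D²`.
It suffices to find a permutation of the vertices under which no edge of `H` lands on an
edge of `M`.

Call a vertex of `M` heavy if its degree exceeds `n / (32 D)`; there are at most `64 D` of them.
They are placed first, greedily, on an independent set of centres in `H`, keeping the total
`M`-degree placed next to any vertex of `H` at most `4n/5`. When some vertex `x` has `M`-degree
above `3n/4`, all other vertices have degree at most `n/4`, and a vertex `u` of minimum degree of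
`H` is put on `x` beforehand, with its at most `δ` neighbours on non-neighbours of `x` that are
independent and of degree at most one in `M`: the few edges of `M` leave enough of them.

Any bijection extending this partial placement is then repaired by swaps. If an edge `uv` of `H`
lands on an edge of `M` with `v` unplaced, the positions that would create a new conflict at `v`
or at its swap partner are bounded by the placed part, the load next to `v` and the degrees of
light vertices, fewer than `n` in total, so some swap strictly reduces the number of conflicts.
-/

open Finset SimpleGraph

lemma card_le_of_forall_lt_of_sum_le {ι : Type*} {s : Finset ι} {g : ι → ℕ} {n k : ℕ}
    (hlt : ∀ x ∈ s, n < g x) (hsum : ∑ x ∈ s, g x ≤ k * n) : #s ≤ k := by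
  by_contra! hk
  have := card_nsmul_le_sum s g (n + 1) hlt
  rw [smul_eq_mul] at this
  nlinarith

lemma mul_sum_le_of_forall_mul_le {ι : Type*} {s : Finset ι} {g : ι → ℕ} {c D n : ℕ}
    (hD : 0 < D) (hs : #s ≤ D) (h : ∀ x ∈ s, c * D * g x ≤ n) : c * ∑ x ∈ s, g x ≤ n := by
  have : D * (c * ∑ x ∈ s, g x) ≤ D * n :=
    calc D * (c * ∑ x ∈ s, g x) = ∑ x ∈ s, c * D * g x := by rw [mul_sum, mul_sum]; ring_nf
      _ ≤ #s * n := by simpa using sum_le_sum h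
      _ ≤ D * n := by gcongr
  exact Nat.le_of_mul_le_mul_left this hD

lemma Finset.injOn_piecewise {α β : Type*} [DecidableEq α] [DecidableEq β] {S T : Finset α}
    {σ τ : α → β} (hσ : Set.InjOn σ S) (hτ : Set.InjOn τ T)
    (hST : Disjoint (S.image σ) (T.image τ)) : Set.InjOn (S.piecewise σ τ) ↑(S ∪ T) := by
  intro a ha b hb hab
  simp only [coe_union, Set.mem_union, mem_coe] at ha hb
  by_cases haS : a ∈ S <;> by_cases hbS : b ∈ S <;>
    simp only [piecewise_eq_of_mem, piecewise_eq_of_notMem, haS, hbS, not_false_eq_true] at hab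
  · exact hσ haS hbS hab
  · refine absurd (mem_image_of_mem τ (hb.resolve_left hbS)) (Finset.disjoint_left.1 hST ?_)
    exact hab ▸ mem_image_of_mem σ haS
  · refine absurd (mem_image_of_mem τ (ha.resolve_left haS)) (Finset.disjoint_left.1 hST ?_)
    exact hab ▸ mem_image_of_mem σ hbS
  · exact hτ (ha.resolve_left haS) (hb.resolve_left hbS) hab

lemma Finset.image_piecewise_union {α β : Type*} [DecidableEq α] [DecidableEq β]
    {S T : Finset α} (hST : Disjoint S T) (σ τ : α → β) :
    (S ∪ T).image (S.piecewise σ τ) = S.image σ ∪ T.image τ := by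
  rw [image_union]
  congr 1 <;> refine image_congr fun a ha => ?_
  · exact piecewise_eq_of_mem _ _ _ ha
  · exact piecewise_eq_of_notMem _ _ _ (Finset.disjoint_right.1 hST ha)

lemma Finset.exists_injOn_mapsTo_of_card_le {α β : Type*} [Nonempty β] {s : Finset α}
    {t : Finset β} (h : #s ≤ #t) : ∃ φ : α → β, Set.InjOn φ s ∧ ∀ a ∈ s, φ a ∈ t := by
  obtain ⟨φ, hφ⟩ := Function.Embedding.exists_of_card_le_finset (α := s) (s := t) (by simpa)
  have hext : ∀ a (ha : a ∈ s),
      Function.extend Subtype.val φ (fun _ => Classical.arbitrary β) a = φ ⟨a, ha⟩ :=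
    fun a ha => Subtype.val_injective.extend_apply (f := ((↑) : s → α)) φ _ ⟨a, ha⟩
  refine ⟨_, fun a ha b hb hab => ?_, fun a ha => hext a ha ▸ hφ ⟨_, rfl⟩⟩
  rw [hext a ha, hext b hb] at hab
  exact congrArg Subtype.val (φ.injective hab)

lemma Set.InjOn.exists_perm_eqOn {V : Type*} [Fintype V] [DecidableEq V] {S : Finset V}
    {σ : V → V} (h : Set.InjOn σ S) : ∃ f : Equiv.Perm V, ∀ a ∈ S, f a = σ a := by
  obtain ⟨g, hg⟩ := Finset.exists_equiv_extend_of_card_eq (t := Finset.univ) Finset.card_univ.symm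
    (Finset.subset_univ _) h
  exact ⟨g.trans (Equiv.subtypeUnivEquiv Finset.mem_univ), hg⟩

lemma forty_thousand_mul_sq_le_of_le_sqrt_div {D n : ℕ} (h : (D : ℝ) ≤ √n / 200) :
    40000 * D ^ 2 ≤ n := by
  have h200 : 200 * (D : ℝ) ≤ √n := by linarith
  have := (Real.le_sqrt (by positivity) (by positivity)).1 h200
  exact_mod_cast (by push_cast; nlinarith : ((40000 * D ^ 2 : ℕ) : ℝ) ≤ n)

lemma containsCopy_of_forall_not_adj_compl {V W : Type*} {G : SimpleGraph V}
    {H : SimpleGraph W} {f : W → V} (hf : Function.Injective f)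
    (hGH : ∀ a b, H.Adj a b → ¬ Gᶜ.Adj (f a) (f b)) : ContainsCopy G H :=
  ⟨f, hf, fun a b hab => by
    by_contra h
    exact hGH a b hab ((compl_adj _ _ _).2 ⟨hf.ne (H.ne_of_adj hab), h⟩)⟩

namespace SimpleGraph

variable {V : Type*} [Fintype V]

section OneGraph

variable (M : SimpleGraph V) [DecidableRel M.Adj]

def heavy (D : ℕ) : Finset V := {x | Fintype.card V < 32 * D * M.degree x}

variable {M} in
lemma mem_heavy {D : ℕ} {x : V} : x ∈ M.heavy D ↔ Fintype.card V < 32 * D * M.degree x := by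
  simp [heavy]

lemma card_heavy_le (D : ℕ) (hM : #M.edgeFinset ≤ Fintype.card V) : #(M.heavy D) ≤ 64 * D := by
  refine card_le_of_forall_lt_of_sum_le (fun x hx => mem_heavy.1 hx) ?_
  calc ∑ x ∈ M.heavy D, 32 * D * M.degree x ≤ ∑ x, 32 * D * M.degree x :=
        sum_le_sum_of_subset (subset_univ _)
    _ = 32 * D * (2 * #M.edgeFinset) := by rw [← mul_sum, sum_degrees_eq_twice_card_edges]
    _ ≤ 64 * D * Fintype.card V := by nlinarith

variable [DecidableEq V]

variable {M} in
lemma mul_degree_le_of_heavy_subset_image {D : ℕ} {S : Finset V} {f : Equiv.Perm V}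
    (h : M.heavy D ⊆ S.image f) {x : V} (hx : x ∉ S) :
    32 * D * M.degree (f x) ≤ Fintype.card V := by
  by_contra! hfx
  obtain ⟨a, ha, hfa⟩ := mem_image.1 (h (mem_heavy.2 hfx))
  exact hx (f.injective hfa ▸ ha)

lemma card_edgeFinset_add_card_edgeFinset_compl :
    #M.edgeFinset + #Mᶜ.edgeFinset = (Fintype.card V).choose 2 := by
  rw [← card_union_of_disjoint (disjoint_edgeFinset.2 disjoint_compl_right), ← edgeFinset_sup,
    ← card_edgeFinset_top_eq_card_choose_two]
  congr 1
  ext e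
  rw [mem_edgeFinset, mem_edgeFinset, sup_compl_eq_top]

lemma degree_add_degree_le {x y : V} (hxy : x ≠ y) :
    M.degree x + M.degree y ≤ #M.edgeFinset + 1 := by
  have hinter : M.incidenceFinset x ∩ M.incidenceFinset y ⊆ {s(x, y)} := by
    intro e he
    simp only [mem_inter, mem_incidenceFinset] at he
    exact mem_singleton.2 ((Sym2.mem_and_mem_iff hxy).1 ⟨he.1.2, he.2.2⟩)
  have hunion : M.incidenceFinset x ∪ M.incidenceFinset y ⊆ M.edgeFinset := by
    simp only [incidenceFinset_eq_filter]
    exact union_subset (filter_subset _ _) (filter_subset _ _)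
  have := card_union_add_card_inter (M.incidenceFinset x) (M.incidenceFinset y)
  have := card_le_card hunion
  have := card_le_card hinter
  rw [card_incidenceFinset_eq_degree, card_incidenceFinset_eq_degree] at *
  simp only [card_singleton] at *
  omega

lemma card_le_card_incident_of_two_le_degree (B : Finset V)
    (hB : ∀ y ∈ B, 2 ≤ M.degree y) : #B ≤ #{e ∈ M.edgeFinset | ∃ y ∈ B, y ∈ e} := by
  have := card_mul_le_card_mul (fun y (e : Sym2 V) => y ∈ e) (m := 2) (n := 2)
    (s := B) (t := {e ∈ M.edgeFinset | ∃ y ∈ B, y ∈ e}) ?_ ?_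
  · omega
  · intro y hy
    convert hB y hy using 1
    rw [← card_incidenceFinset_eq_degree, incidenceFinset_eq_filter, bipartiteAbove,
      filter_filter]
    congr 1
    exact filter_congr fun e _ => ⟨fun h => h.2, fun h => ⟨⟨y, hy, h⟩, h⟩⟩
  · intro e _
    induction e using Sym2.ind with
    | _ a b =>
      refine (card_le_card (t := {a, b}) fun y hy => ?_).trans card_le_two
      simpa [bipartiteBelow] using (mem_filter.1 hy).2

lemma exists_indep_subset (A : Finset V) :
    ∃ T ⊆ A, #A ≤ #T + #(M.edgeFinset ∩ A.sym2) ∧ ∀ a ∈ T, ∀ b ∈ T, ¬ M.Adj a b := by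
  set E := M.edgeFinset ∩ A.sym2
  refine ⟨A \ E.image fun e => e.out.1, sdiff_subset, ?_, fun a ha b hb hab => ?_⟩
  · exact card_le_card_sdiff_add_card.trans (by gcongr; exact card_image_le)
  have he : s(a, b) ∈ E := mem_inter.2 ⟨mem_edgeFinset.2 hab,
    mk_mem_sym2_iff.2 ⟨(mem_sdiff.1 ha).1, (mem_sdiff.1 hb).1⟩⟩
  have hout : s(a, b).out.1 ∈ E.image fun e => e.out.1 := mem_image_of_mem _ he
  rcases Sym2.mem_iff.1 (Sym2.out_fst_mem s(a, b)) with h | h <;> rw [h] at hout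
  exacts [(mem_sdiff.1 ha).2 hout, (mem_sdiff.1 hb).2 hout]

lemma exists_indep_subset_degree_le_one (A : Finset V) :
    ∃ T ⊆ A, #A ≤ #T + #{e ∈ M.edgeFinset | ∃ y ∈ A, y ∈ e} ∧ (∀ y ∈ T, M.degree y ≤ 1) ∧
      ∀ a ∈ T, ∀ b ∈ T, ¬ M.Adj a b := by
  set B := {y ∈ A | 2 ≤ M.degree y}
  set A' := {y ∈ A | ¬ 2 ≤ M.degree y}
  obtain ⟨T, hTA', hT, hTind⟩ := M.exists_indep_subset A'
  refine ⟨T, hTA'.trans (filter_subset _ _), ?_, fun y hy => ?_, hTind⟩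
  · have hBA' : #B + #A' = #A := card_filter_add_card_filter_not _
    have hB := M.card_le_card_incident_of_two_le_degree B fun y hy => (mem_filter.1 hy).2
    have hdisj : Disjoint {e ∈ M.edgeFinset | ∃ y ∈ B, y ∈ e} (M.edgeFinset ∩ A'.sym2) := by
      refine Finset.disjoint_left.2 fun e he he' => ?_
      obtain ⟨y, hyB, hye⟩ := (mem_filter.1 he).2
      exact (mem_filter.1 (mem_sym2_iff.1 (mem_inter.1 he').2 y hye)).2 (mem_filter.1 hyB).2
    have hsub : {e ∈ M.edgeFinset | ∃ y ∈ B, y ∈ e} ∪ M.edgeFinset ∩ A'.sym2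
        ⊆ {e ∈ M.edgeFinset | ∃ y ∈ A, y ∈ e} := by
      intro e he
      rcases mem_union.1 he with he | he
      · obtain ⟨heM, y, hy, hye⟩ := mem_filter.1 he
        exact mem_filter.2 ⟨heM, y, (mem_filter.1 hy).1, hye⟩
      · obtain ⟨heM, heA⟩ := mem_inter.1 he
        have hy := Sym2.out_fst_mem e
        exact mem_filter.2 ⟨heM, _, (mem_filter.1 (mem_sym2_iff.1 heA _ hy)).1, hy⟩
    have := card_le_card hsub
    rw [card_union_of_disjoint hdisj] at this
    omega
  · have := (mem_filter.1 (hTA' hy)).2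
    omega

lemma exists_indep_nonneighbors (x : V) :
    ∃ T : Finset V, Fintype.card V ≤ #T + #M.edgeFinset + 1 ∧
      (∀ y ∈ T, y ≠ x ∧ ¬ M.Adj x y ∧ M.degree y ≤ 1) ∧ ∀ a ∈ T, ∀ b ∈ T, ¬ M.Adj a b := by
  set A := (insert x (M.neighborFinset x))ᶜ
  have hA : ∀ y ∈ A, y ≠ x ∧ ¬ M.Adj x y := by simp [A]
  obtain ⟨T, hTA, hT, hTdeg, hTind⟩ := M.exists_indep_subset_degree_le_one A
  refine ⟨T, ?_, fun y hy => ⟨(hA y (hTA hy)).1, (hA y (hTA hy)).2, hTdeg y hy⟩, hTind⟩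
  have hcardA : #A + M.degree x + 1 = Fintype.card V := by
    have hx : x ∉ M.neighborFinset x := by simp
    have := card_le_univ (insert x (M.neighborFinset x))
    rw [card_compl, card_insert_of_notMem hx, card_neighborFinset_eq_degree] at *
    omega
  have hdisj : Disjoint {e ∈ M.edgeFinset | ∃ y ∈ A, y ∈ e} (M.incidenceFinset x) := by
    refine Finset.disjoint_left.2 fun e he hxe => ?_
    obtain ⟨y, hyA, hye⟩ := (mem_filter.1 he).2
    obtain ⟨hxM, hx⟩ := (mem_incidenceFinset _ _ _).1 hxe
    rw [(Sym2.mem_and_mem_iff (hA y hyA).1.symm).1 ⟨hx, hye⟩] at hxM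
    exact (hA y hyA).2 hxM
  have hsub : {e ∈ M.edgeFinset | ∃ y ∈ A, y ∈ e} ∪ M.incidenceFinset x ⊆ M.edgeFinset := by
    rw [incidenceFinset_eq_filter]
    exact union_subset (filter_subset _ _) (filter_subset _ _)
  have := card_le_card hsub
  rw [card_union_of_disjoint hdisj, card_incidenceFinset_eq_degree] at this
  omega

end OneGraph

variable [DecidableEq V] (H M : SimpleGraph V) [DecidableRel H.Adj] [DecidableRel M.Adj]

/-- Placing `v` on `z` creates a conflict with an `H`-neighbour `u ∈ S` only if `z` is an
`M`-neighbour of `σ u`, so the load bounds the number of positions forbidden for `v`. -/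
def load (σ : V → V) (S : Finset V) (v : V) : ℕ :=
  ∑ u ∈ H.neighborFinset v ∩ S, M.degree (σ u)

variable {H M}

lemma load_congr {σ τ : V → V} {S : Finset V} (h : ∀ a ∈ S, σ a = τ a) (v : V) :
    load H M σ S v = load H M τ S v :=
  sum_congr rfl fun u hu => by rw [h u (mem_inter.1 hu).2]

lemma load_union_piecewise {S T : Finset V} (hST : Disjoint S T) (σ τ : V → V) (v : V) :
    load H M (S.piecewise σ τ) (S ∪ T) v = load H M σ S v + load H M τ T v := by
  unfold load
  rw [inter_union_distrib_left, sum_union (hST.mono inter_subset_right inter_subset_right)]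
  congr 1 <;> refine sum_congr rfl fun u hu => ?_
  · rw [piecewise_eq_of_mem _ _ _ (mem_inter.1 hu).2]
  · rw [piecewise_eq_of_notMem _ _ _ (Finset.disjoint_right.1 hST (mem_inter.1 hu).2)]

lemma load_insert_update {T : Finset V} {c : V} (hc : c ∉ T) (τ : V → V) (x v : V) :
    load H M (Function.update τ c x) (insert c T) v
      = load H M τ T v + if H.Adj v c then M.degree x else 0 := by
  have hτ : ∀ u ∈ H.neighborFinset v ∩ T, M.degree (Function.update τ c x u) = M.degree (τ u) :=
    fun u hu => by rw [Function.update_of_ne (ne_of_mem_of_not_mem (mem_inter.1 hu).2 hc)]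
  unfold load
  split_ifs with h
  · rw [inter_insert_of_mem ((mem_neighborFinset _ _ _).2 h),
      sum_insert fun hc' => hc (mem_inter.1 hc').2, Function.update_self, sum_congr rfl hτ,
      add_comm]
  · rw [inter_insert_of_notMem fun h' => h ((mem_neighborFinset _ _ _).1 h'), sum_congr rfl hτ,
      add_zero]

lemma sum_load_le {D : ℕ} (hdegH : ∀ v, H.degree v ≤ D) (τ : V → V) (T : Finset V) :
    ∑ v, load H M τ T v ≤ D * ∑ u ∈ T, M.degree (τ u) :=
  calc ∑ v, load H M τ T v = ∑ u ∈ T, ∑ _v ∈ H.neighborFinset u, M.degree (τ u) :=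
        sum_comm' fun v u => by simp [mem_neighborFinset, adj_comm, and_comm]
    _ = ∑ u ∈ T, H.degree u * M.degree (τ u) := by simp [sum_const, card_neighborFinset_eq_degree]
    _ ≤ ∑ u ∈ T, D * M.degree (τ u) := by gcongr with u; exact hdegH u
    _ = D * ∑ u ∈ T, M.degree (τ u) := by rw [mul_sum]

lemma exists_free_center {D : ℕ} (hD : 0 < D) (hDn : 40000 * D ^ 2 ≤ Fintype.card V)
    (hdegH : ∀ v, H.degree v ≤ D) (hM : #M.edgeFinset ≤ Fintype.card V)
    {F T : Finset V} (hF : #F ≤ 4 * D ^ 2) {τ : V → V} (hτ : Set.InjOn τ T)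
    (hT : T.image τ ⊆ M.heavy D) :
    ∃ c, c ∉ F ∧ c ∉ T ∧ (∀ u ∈ T, ¬ H.Adj u c) ∧
      ∀ w, H.Adj c w → 20 * load H M τ T w ≤ Fintype.card V := by
  set n := Fintype.card V
  have hTcard : #T ≤ 64 * D := by
    rw [← card_image_of_injOn hτ]
    exact (card_le_card hT).trans (M.card_heavy_le D hM)
  have hmass : ∑ u ∈ T, M.degree (τ u) ≤ 2 * n := by
    calc ∑ u ∈ T, M.degree (τ u) = ∑ x ∈ T.image τ, M.degree x :=
          (sum_image (f := fun x => M.degree x) hτ).symm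
      _ ≤ ∑ x, M.degree x := sum_le_sum_of_subset (subset_univ _)
      _ ≤ 2 * n := by rw [sum_degrees_eq_twice_card_edges]; omega
  set sat : Finset V := {w | n < 20 * load H M τ T w}
  have hsat : #sat ≤ 40 * D := by
    refine card_le_of_forall_lt_of_sum_le (fun w hw => (mem_filter.1 hw).2) ?_
    calc ∑ w ∈ sat, 20 * load H M τ T w ≤ 20 * ∑ w, load H M τ T w := by
          rw [← mul_sum]; gcongr; exact subset_univ _
      _ ≤ 20 * (D * (2 * n)) := by gcongr; exact (sum_load_le hdegH τ T).trans (by gcongr)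
      _ = 40 * D * n := by ring
  have hnbhd : ∀ s : Finset V, #(s.biUnion fun v => H.neighborFinset v) ≤ #s * D :=
    fun s => card_biUnion_le_card_mul _ _ _ fun v _ => hdegH v
  have hbad : #(F ∪ T ∪ (T.biUnion fun v => H.neighborFinset v) ∪
      (sat.biUnion fun v => H.neighborFinset v)) < #(univ : Finset V) := by
    have := card_union_le (F ∪ T ∪ (T.biUnion fun v => H.neighborFinset v))
      (sat.biUnion fun v => H.neighborFinset v)
    have := card_union_le (F ∪ T) (T.biUnion fun v => H.neighborFinset v)
    have := card_union_le F T
    have := (hnbhd T).trans (Nat.mul_le_mul_right D hTcard)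
    have := (hnbhd sat).trans (Nat.mul_le_mul_right D hsat)
    rw [card_univ]
    nlinarith
  obtain ⟨c, -, hc⟩ := exists_mem_notMem_of_card_lt_card hbad
  simp only [mem_union, mem_biUnion, mem_neighborFinset, not_or, not_exists, not_and] at hc
  refine ⟨c, hc.1.1.1, hc.1.1.2, hc.1.2, fun w hw => ?_⟩
  by_contra h
  exact hc.2 w (mem_filter.2 ⟨mem_univ _, by omega⟩) hw.symm

lemma exists_centers {D : ℕ} (hD : 0 < D) (hDn : 40000 * D ^ 2 ≤ Fintype.card V)
    (hdegH : ∀ v, H.degree v ≤ D) (hM : #M.edgeFinset ≤ Fintype.card V)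
    {F : Finset V} (hF : #F ≤ 4 * D ^ 2) {Q : Finset V} (hQ : Q ⊆ M.heavy D)
    (hQmass : ∀ x ∈ Q, 4 * M.degree x ≤ 3 * Fintype.card V) :
    ∃ (T : Finset V) (τ : V → V), T.image τ = Q ∧ Set.InjOn τ T ∧ Disjoint T F ∧
      (∀ a ∈ T, ∀ b ∈ T, ¬ H.Adj a b) ∧ ∀ v, 5 * load H M τ T v ≤ 4 * Fintype.card V := by
  induction Q using Finset.induction_on with
  | empty => exact ⟨∅, id, rfl, by simp, by simp, by simp, by simp [load]⟩
  | insert x Q hxQ ih =>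
    obtain ⟨T, τ, himg, hinj, hTF, hTind, hload⟩ := ih ((subset_insert _ _).trans hQ)
      fun y hy => hQmass y (mem_insert_of_mem hy)
    obtain ⟨c, hcF, hcT, hcind, hcload⟩ := exists_free_center hD hDn hdegH hM hF hinj
      (himg ▸ (subset_insert _ _).trans hQ)
    have hτ : ∀ u ∈ T, Function.update τ c x u = τ u :=
      fun u hu => Function.update_of_ne (ne_of_mem_of_not_mem hu hcT) _ _
    refine ⟨insert c T, Function.update τ c x, ?_, ?_, disjoint_insert_left.2 ⟨hcF, hTF⟩,
      ?_, fun v => ?_⟩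
    · rw [image_insert, Function.update_self, image_congr hτ, himg]
    · rw [coe_insert, Set.injOn_insert (mod_cast hcT), Function.update_self]
      refine ⟨hinj.congr fun u hu => (hτ u hu).symm, fun ⟨u, hu, hux⟩ => hxQ ?_⟩
      rw [← himg, ← hux, hτ u hu]
      exact mem_image_of_mem τ hu
    · simp only [mem_insert]
      rintro a (rfl | ha) b (rfl | hb)
      exacts [H.irrefl, fun h => hcind b hb h.symm, hcind a ha, hTind a ha b hb]
    · rw [load_insert_update hcT]
      split_ifs with h
      · have := hcload v h.symm
        have := hQmass x (mem_insert_self x Q)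
        omega
      · simpa using hload v

variable (H M) in
def conflicts (f : V → V) : Finset (Sym2 V) :=
  {e ∈ H.edgeFinset | e.map f ∈ M.edgeFinset}

lemma mem_conflicts {f : V → V} {a b : V} :
    s(a, b) ∈ conflicts H M f ↔ H.Adj a b ∧ M.Adj (f a) (f b) := by
  simp [conflicts]

lemma conflicts_eq_empty_iff {f : V → V} :
    conflicts H M f = ∅ ↔ ∀ a b, H.Adj a b → ¬ M.Adj (f a) (f b) := by
  simp [eq_empty_iff_forall_notMem, Sym2.forall, mem_conflicts]

lemma conflicts_swap_subset (f : Equiv.Perm V) {v w : V} (hvw : ¬ M.Adj (f v) (f w))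
    (hv : ∀ b, H.Adj v b → ¬ M.Adj (f w) (f b))
    (hw : ∀ b, H.Adj w b → b ≠ v → ¬ M.Adj (f v) (f b)) :
    conflicts H M ((Equiv.swap v w).trans f) ⊆ {e ∈ conflicts H M f | v ∉ e} := by
  set f' := (Equiv.swap v w).trans f
  have hf'v : f' v = f w := by simp [f']
  have hf'w : f' w = f v := by simp [f']
  have hf' : ∀ t, t ≠ v → t ≠ w → f' t = f t := fun t htv htw => by
    simp [f', Equiv.swap_apply_of_ne_of_ne htv htw]
  have hne_v : ∀ a b, H.Adj a b → M.Adj (f' a) (f' b) → a ≠ v := by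
    rintro a b hab hM rfl
    by_cases hbw : b = w
    · subst hbw
      rw [hf'v, hf'w] at hM
      exact hvw hM.symm
    · rw [hf'v, hf' b (H.ne_of_adj hab).symm hbw] at hM
      exact hv b hab hM
  have hne_w : ∀ a b, H.Adj a b → M.Adj (f' a) (f' b) → a ≠ w := by
    rintro a b hab hM rfl
    have hbv := hne_v b a hab.symm hM.symm
    rw [hf'w, hf' b hbv (H.ne_of_adj hab).symm] at hM
    exact hw b hab hbv hM
  intro e he
  induction e using Sym2.ind with
  | _ a b =>
    obtain ⟨hab, hM⟩ := mem_conflicts.1 he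
    have hav := hne_v a b hab hM
    have hbv := hne_v b a hab.symm hM.symm
    have haw := hne_w a b hab hM
    have hbw := hne_w b a hab.symm hM.symm
    rw [hf' a hav haw, hf' b hbv hbw] at hM
    simp only [mem_filter, mem_conflicts, Sym2.mem_iff, not_or]
    exact ⟨⟨hab, hM⟩, Ne.symm hav, Ne.symm hbv⟩

lemma exists_swap_partner {D : ℕ} (hD : 0 < D) (hdegH : ∀ v, H.degree v ≤ D)
    {S : Finset V} (hS : 64 * #S ≤ Fintype.card V) (f : Equiv.Perm V)
    (hheavy : M.heavy D ⊆ S.image f) (hload : ∀ v ∉ S, 8 * load H M f S v ≤ 7 * Fintype.card V)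
    {v : V} (hvS : v ∉ S) :
    ∃ w ∉ S, ¬ M.Adj (f v) (f w) ∧ (∀ b, H.Adj v b → ¬ M.Adj (f w) (f b)) ∧
      ∀ b, H.Adj w b → ¬ M.Adj (f v) (f b) := by
  set n := Fintype.card V
  have hlight : ∀ x ∉ S, 32 * D * M.degree (f x) ≤ n :=
    fun x hx => mul_degree_le_of_heavy_subset_image hheavy hx
  have hrest : 32 * ∑ b ∈ H.neighborFinset v \ S, M.degree (f b) ≤ n :=
    mul_sum_le_of_forall_mul_le hD ((card_le_card sdiff_subset).trans (hdegH v))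
      fun b hb => hlight b (mem_sdiff.1 hb).2
  have hv : 32 * (M.degree (f v) * D) ≤ n := by
    calc 32 * (M.degree (f v) * D) = 32 * D * M.degree (f v) := by ring
      _ ≤ n := hlight v hvS
  -- swapping `v` with `w` creates no new conflict unless `f w` lies in one of these sets
  set B₁ := S.image f
  set B₂ := M.neighborFinset (f v)
  set B₃ := (H.neighborFinset v).biUnion fun b => M.neighborFinset (f b)
  set B₄ := B₂.biUnion fun y => (H.neighborFinset (f.symm y)).image f
  have hBad : #(B₁ ∪ B₂ ∪ B₃ ∪ B₄) < #(univ : Finset V) := by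
    have h₁ : #(B₁ ∪ B₂ ∪ B₃ ∪ B₄) ≤ #B₁ + #B₂ + #B₃ + #B₄ := (card_union_le _ _).trans
      (by gcongr; exact (card_union_le _ _).trans (by gcongr; exact card_union_le _ _))
    have h₂ : #B₁ ≤ #S := card_image_le
    have h₃ : #B₃ ≤ load H M f S v + ∑ b ∈ H.neighborFinset v \ S, M.degree (f b) :=
      card_biUnion_le.trans (sum_inter_add_sum_sdiff _ _ _).ge
    have h₄ : #B₄ ≤ M.degree (f v) * D :=
      card_biUnion_le_card_mul _ _ _ fun y _ => card_image_le.trans (hdegH _)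
    have h₅ : M.degree (f v) ≤ M.degree (f v) * D := Nat.le_mul_of_pos_right _ hD
    have := hload v hvS
    have : 0 < n := Fintype.card_pos_iff.2 ⟨v⟩
    rw [card_univ, card_neighborFinset_eq_degree] at *
    omega
  obtain ⟨z, -, hz⟩ := exists_mem_notMem_of_card_lt_card hBad
  have hfz : f (f.symm z) = z := f.apply_symm_apply z
  simp only [B₁, B₂, B₃, B₄, mem_union, mem_image, mem_biUnion, mem_neighborFinset, not_or,
    not_exists, not_and] at hz
  obtain ⟨⟨⟨hzS, hzv⟩, hzN⟩, hzw⟩ := hz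
  refine ⟨f.symm z, fun hw => hzS _ hw hfz, by rwa [hfz], fun b hb hM => ?_, fun b hb hM => ?_⟩
  · exact hzN b hb (by rw [hfz] at hM; exact hM.symm)
  · exact hzw (f b) hM _ (by simpa using hb.symm) hfz

lemma exists_perm_card_conflicts_lt {D : ℕ} (hD : 0 < D) (hdegH : ∀ v, H.degree v ≤ D)
    {S : Finset V} (hS : 64 * #S ≤ Fintype.card V) (f : Equiv.Perm V)
    (hheavy : M.heavy D ⊆ S.image f)
    (hSconf : ∀ a ∈ S, ∀ b ∈ S, H.Adj a b → ¬ M.Adj (f a) (f b))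
    (hload : ∀ v ∉ S, 8 * load H M f S v ≤ 7 * Fintype.card V)
    (hconf : (conflicts H M f).Nonempty) :
    ∃ f' : Equiv.Perm V, (∀ a ∈ S, f' a = f a) ∧ #(conflicts H M f') < #(conflicts H M f) := by
  obtain ⟨u, v, huv, hMuv, hvS⟩ : ∃ u v, H.Adj u v ∧ M.Adj (f u) (f v) ∧ v ∉ S := by
    obtain ⟨e, he⟩ := hconf
    induction e using Sym2.ind with
    | _ a b =>
      obtain ⟨hab, hM⟩ := mem_conflicts.1 he
      by_cases hb : b ∈ S
      · by_cases ha : a ∈ S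
        · exact absurd hM (hSconf a ha b hb hab)
        · exact ⟨b, a, hab.symm, hM.symm, ha⟩
      · exact ⟨a, b, hab, hM, hb⟩
  obtain ⟨w, hwS, hvw, hv, hw⟩ := exists_swap_partner hD hdegH hS f hheavy hload hvS
  refine ⟨(Equiv.swap v w).trans f, fun a ha => ?_, ?_⟩
  · rw [Equiv.trans_apply, Equiv.swap_apply_of_ne_of_ne (ne_of_mem_of_not_mem ha hvS)
      (ne_of_mem_of_not_mem ha hwS)]
  have hsub := conflicts_swap_subset f hvw hv fun b hb _ => hw b hb
  refine (card_le_card hsub).trans_lt (card_lt_card (filter_ssubset.2 ⟨s(u, v), ?_, by simp⟩))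
  exact mem_conflicts.2 ⟨huv, hMuv⟩

lemma exists_packing_of_partial {D : ℕ} (hD : 0 < D) (hdegH : ∀ v, H.degree v ≤ D)
    {S : Finset V} (hS : 64 * #S ≤ Fintype.card V) {σ : V → V} (hσ : Set.InjOn σ S)
    (hheavy : M.heavy D ⊆ S.image σ)
    (hSconf : ∀ a ∈ S, ∀ b ∈ S, H.Adj a b → ¬ M.Adj (σ a) (σ b))
    (hload : ∀ v ∉ S, 8 * load H M σ S v ≤ 7 * Fintype.card V) :
    ∃ f : Equiv.Perm V, ∀ a b, H.Adj a b → ¬ M.Adj (f a) (f b) := by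
  suffices ∀ k (f : Equiv.Perm V), (∀ a ∈ S, f a = σ a) → #(conflicts H M f) = k →
      ∃ g : Equiv.Perm V, ∀ a b, H.Adj a b → ¬ M.Adj (g a) (g b) by
    obtain ⟨f, hf⟩ := hσ.exists_perm_eqOn
    exact this _ f hf rfl
  intro k
  induction k using Nat.strong_induction_on with
  | _ k ih =>
    intro f hf hk
    rcases (conflicts H M f).eq_empty_or_nonempty with h | h
    · exact ⟨f, conflicts_eq_empty_iff.1 h⟩
    obtain ⟨f', hf', hlt⟩ := exists_perm_card_conflicts_lt hD hdegH hS f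
      (image_congr hf ▸ hheavy)
      (fun a ha b hb hab => by rw [hf a ha, hf b hb]; exact hSconf a ha b hb hab)
      (fun v hv => by rw [load_congr hf]; exact hload v hv) h
    exact ih _ (hk ▸ hlt) f' (fun a ha => (hf' a ha).trans (hf a ha)) rfl

lemma exists_packing_of_initial_placement {D : ℕ} (hD : 0 < D)
    (hDn : 40000 * D ^ 2 ≤ Fintype.card V) (hdegH : ∀ v, H.degree v ≤ D)
    (hM : #M.edgeFinset ≤ Fintype.card V) {S₀ : Finset V} (hS₀ : #S₀ ≤ D + 1) {σ₀ : V → V}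
    (hσ₀ : Set.InjOn σ₀ S₀) (hconf₀ : ∀ a ∈ S₀, ∀ b ∈ S₀, H.Adj a b → ¬ M.Adj (σ₀ a) (σ₀ b))
    (hlight₀ : ∀ a ∈ S₀, ∀ v ∉ S₀, H.Adj a v → 32 * D * M.degree (σ₀ a) ≤ Fintype.card V)
    (hmass : ∀ x ∈ M.heavy D, x ∉ S₀.image σ₀ → 4 * M.degree x ≤ 3 * Fintype.card V) :
    ∃ f : Equiv.Perm V, ∀ a b, H.Adj a b → ¬ M.Adj (f a) (f b) := by
  set Q := {x ∈ M.heavy D | x ∉ S₀.image σ₀}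
  set F := S₀ ∪ S₀.biUnion fun a => H.neighborFinset a
  have hF : #F ≤ 4 * D ^ 2 := by
    have := card_union_le S₀ (S₀.biUnion fun a => H.neighborFinset a)
    have := card_biUnion_le_card_mul S₀ (fun a => H.neighborFinset a) D fun a _ => hdegH a
    have := Nat.mul_le_mul_right D hS₀
    nlinarith
  obtain ⟨T, τ, himg, hτ, hTF, hTind, hload⟩ := exists_centers hD hDn hdegH hM hF
    (filter_subset _ _) fun x hx => hmass x (mem_filter.1 hx).1 (mem_filter.1 hx).2
  have hST : Disjoint S₀ T := (hTF.mono_right subset_union_left).symm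
  have hS₀T : ∀ a ∈ S₀, ∀ b ∈ T, ¬ H.Adj a b := fun a ha b hb hab =>
    Finset.disjoint_left.1 hTF hb <| mem_union_right _ <| mem_biUnion.2 ⟨a, ha, by simpa using hab⟩
  have hσ : Set.InjOn (S₀.piecewise σ₀ τ) ↑(S₀ ∪ T) := injOn_piecewise hσ₀ hτ <| by
    rw [himg]
    exact Finset.disjoint_right.2 fun x hx => (mem_filter.1 hx).2
  refine exists_packing_of_partial hD hdegH ?_ hσ ?_ ?_ fun v hv => ?_
  · have hT : #T ≤ 64 * D := by
      rw [← card_image_of_injOn hτ, himg]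
      exact (card_le_card (filter_subset _ _)).trans (M.card_heavy_le D hM)
    have := card_union_le S₀ T
    nlinarith
  · intro x hx
    rw [image_piecewise_union hST, himg, mem_union]
    by_cases hx₀ : x ∈ S₀.image σ₀
    exacts [Or.inl hx₀, Or.inr (mem_filter.2 ⟨hx, hx₀⟩)]
  · simp only [mem_union]
    rintro a (ha | ha) b (hb | hb) hab
    · rw [piecewise_eq_of_mem _ _ _ ha, piecewise_eq_of_mem _ _ _ hb]
      exact hconf₀ a ha b hb hab
    exacts [absurd hab (hS₀T a ha b hb), absurd hab.symm (hS₀T b hb a ha),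
      absurd hab (hTind a ha b hb)]
  · have hv₀ : v ∉ S₀ := fun h => hv (mem_union_left _ h)
    have hlight : 32 * load H M σ₀ S₀ v ≤ Fintype.card V :=
      mul_sum_le_of_forall_mul_le hD ((card_le_card inter_subset_left).trans (hdegH v))
        fun a ha => hlight₀ a (mem_inter.1 ha).2 v hv₀
          ((mem_neighborFinset _ _ _).1 (mem_inter.1 ha).1).symm
    rw [load_union_piecewise hST]
    have := hload v
    omega

lemma exists_packing_of_dominant_vertex {D : ℕ} (hD : 0 < D)
    (hDn : 40000 * D ^ 2 ≤ Fintype.card V) (hdegH : ∀ v, H.degree v ≤ D) {u : V}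
    (hMu : #M.edgeFinset + H.degree u < Fintype.card V) {x : V}
    (hx : 3 * Fintype.card V < 4 * M.degree x) :
    ∃ f : Equiv.Perm V, ∀ a b, H.Adj a b → ¬ M.Adj (f a) (f b) := by
  obtain ⟨T, hTcard, hT, hTind⟩ := M.exists_indep_nonneighbors x
  have : Nonempty V := ⟨x⟩
  obtain ⟨φ, hφ, hφT⟩ := exists_injOn_mapsTo_of_card_le (s := H.neighborFinset u) (t := T)
    (by rw [card_neighborFinset_eq_degree]; omega)
  set σ₀ := Function.update φ u x
  have hu : u ∉ H.neighborFinset u := by simp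
  have hσu : σ₀ u = x := Function.update_self _ _ _
  have hσφ : ∀ a ∈ H.neighborFinset u, σ₀ a = φ a :=
    fun a ha => Function.update_of_ne (ne_of_mem_of_not_mem ha hu) _ _
  have hσT : ∀ a ∈ H.neighborFinset u, σ₀ a ∈ T := fun a ha => hσφ a ha ▸ hφT a ha
  refine exists_packing_of_initial_placement hD hDn hdegH (by omega)
    (S₀ := insert u (H.neighborFinset u)) (σ₀ := σ₀) ?_ ?_ ?_ ?_ ?_
  · exact (card_insert_le _ _).trans (by simp [hdegH u])
  · rw [coe_insert, Set.injOn_insert (by simp), hσu]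
    exact ⟨hφ.congr fun a ha => (hσφ a ha).symm, fun ⟨a, ha, hax⟩ => (hT _ (hσT a ha)).1 hax⟩
  · simp only [mem_insert]
    rintro a (rfl | ha) b (rfl | hb) hab
    · exact absurd hab H.irrefl
    · rw [hσu]
      exact (hT _ (hσT b hb)).2.1
    · rw [hσu]
      exact fun h => (hT _ (hσT a ha)).2.1 h.symm
    · exact hTind _ (hσT a ha) _ (hσT b hb)
  · intro a ha v hv hav
    have ha' : a ∈ H.neighborFinset u := by
      rcases mem_insert.1 ha with rfl | ha
      · exact absurd (mem_insert_of_mem (by simpa using hav)) hv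
      · exact ha
    have := Nat.mul_le_mul_left (32 * D) (hT _ (hσT a ha')).2.2
    nlinarith
  · intro y _ hy
    have hyx : y ≠ x := fun h => hy (mem_image.2 ⟨u, mem_insert_self _ _, hσu.trans h.symm⟩)
    have := M.degree_add_degree_le hyx
    omega

theorem exists_packing {D : ℕ} (hD : 0 < D) (hDn : 40000 * D ^ 2 ≤ Fintype.card V)
    (hdegH : ∀ v, H.degree v ≤ D) {u : V} (hMu : #M.edgeFinset + H.degree u < Fintype.card V) :
    ∃ f : Equiv.Perm V, ∀ a b, H.Adj a b → ¬ M.Adj (f a) (f b) := by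
  by_cases hdom : ∃ x, 3 * Fintype.card V < 4 * M.degree x
  · obtain ⟨x, hx⟩ := hdom
    exact exists_packing_of_dominant_vertex hD hDn hdegH hMu hx
  · push Not at hdom
    exact exists_packing_of_initial_placement hD hDn hdegH (by omega) (S₀ := ∅) (σ₀ := id)
      (by simp) (by simp) (by simp) (by simp) fun x _ _ => hdom x

end SimpleGraph

theorem universality_for_sparse_spanning_graphs :
    ∃ n₀ : ℕ, ∀ n : ℕ, n₀ ≤ n → ∀ δ : ℕ, 1 ≤ δ →
      ∀ G : SimpleGraph (Fin n),
        (n - 1).choose 2 + δ - 1 < G.edgeSet.ncard →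
        ∀ (H : SimpleGraph (Fin n)) [DecidableRel H.Adj],
          (∀ v : Fin n, 0 < H.degree v) →
          H.minDegree ≤ δ →
          (H.maxDegree : ℝ) ≤ Real.sqrt n / 200 →
          ContainsCopy G H := by
  classical
  refine ⟨1, fun n hn δ _ G hG H _ hpos hmin hmax => ?_⟩
  have : Nonempty (Fin n) := ⟨⟨0, hn⟩⟩
  obtain ⟨u, hu⟩ := H.exists_minimal_degree_vertex
  have hsparse : #Gᶜ.edgeFinset + H.degree u < Fintype.card (Fin n) := by
    have hcompl := G.card_edgeFinset_add_card_edgeFinset_compl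
    have hchoose : n.choose 2 = (n - 1).choose 2 + (n - 1) := by
      obtain ⟨m, rfl⟩ := Nat.exists_eq_add_of_le' hn
      simp [Nat.choose_succ_succ, add_comm]
    rw [← coe_edgeFinset, Set.ncard_coe_finset] at hG
    rw [Fintype.card_fin] at *
    omega
  obtain ⟨f, hf⟩ := exists_packing ((hpos u).trans_le (H.degree_le_maxDegree u))
    (by simpa using forty_thousand_mul_sq_le_of_le_sqrt_div hmax) H.degree_le_maxDegree hsparse
  exact containsCopy_of_forall_not_adj_compl f.injective hf
end

section
/- Let k ≥ 3 be such that (k+6)/2 is an integer, let n = k(k+6)/2 + 1, and let H be the simple graph on n vertices consisting of k vertex-disjoint cliques of size (n−1)/k = (k+6)/2 each, together with one additional vertex joined to δ vertices of the cliques, where 1 ≤ δ ≤ (n−1)/k − 1. Then the graph obtained from the complete graph K_n by deleting all edges inside a fixed set of k+2 vertices contains no subgraph isomorphic to H, and hence ex(n,H) ≥ C(n,2) − C(k+2,2) > C(n−1,2) + δ(H) − 1. -/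
/-- The extremal number `ex(n, H)`: the maximum number of edges in a simple graph on
`n` vertices containing no subgraph isomorphic to `H`. -/
noncomputable def exNum (n : ℕ) {β : Type*} (H : SimpleGraph β) : ℕ :=
  sSup {m | ∃ G : SimpleGraph (Fin n), ¬ ContainsCopy G H ∧ m = G.edgeSet.ncard}

/-- The graph consisting of `k` vertex-disjoint cliques of size `m` each (the vertices
`some (i, j)` with fixed clique-index `i`), together with one additional vertex `none`
joined exactly to the vertices in `A`. -/
def cliquesPlusVertex (k m : ℕ) (A : Finset (Fin k × Fin m)) :
    SimpleGraph (Option (Fin k × Fin m)) :=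
  SimpleGraph.fromRel (fun u v =>
    match u, v with
    | some p, some q => p.1 = q.1
    | none, some q => q ∈ A
    | _, _ => False)

/-- The complete graph with all edges inside `W` deleted. -/
def completeMinusClique {V : Type*} (W : Finset V) : SimpleGraph V :=
  SimpleGraph.fromRel (fun u v => u ∉ W ∨ v ∉ W)

/-!
The `k + 2` vertices of `W` form an independent set of `completeMinusClique W`. Both graphs have
`n` vertices, so a copy of `H` would be a bijection and would pull `W` back to an independent set
of size `k + 2` in `H`; but an independent set of `H` meets each of the `k` cliques at most once,
so it has at most `k + 1` vertices. For the inequality, `n - 1 = k * m` with `2 * k * m = k² + 6k`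
gives `C(n, 2) - C(k + 2, 2) - C(n - 1, 2) = (3k - 2) / 2 > m - 2 ≥ δ - 1`.
-/

open SimpleGraph Finset

theorem containsCopy_iff_isContained {α β : Type*} {G : SimpleGraph α} {H : SimpleGraph β} :
    ContainsCopy G H ↔ H ⊑ G :=
  ⟨fun ⟨f, hf, hadj⟩ => ⟨⟨⟨f, hadj _ _⟩, hf⟩⟩,
    fun ⟨c⟩ => ⟨c, c.injective, fun _ _ => c.toHom.map_adj⟩⟩

theorem ContainsCopy.exists_isIndepSet {α β : Type*} [Fintype α] [Fintype β]
    {G : SimpleGraph α} {H : SimpleGraph β} (hGH : ContainsCopy G H)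
    (hcard : Fintype.card α ≤ Fintype.card β) {s : Finset α} (hs : G.IsIndepSet s) :
    ∃ t : Finset β, H.IsIndepSet t ∧ #t = #s := by
  obtain ⟨f, hf, hadj⟩ := hGH
  let e := Equiv.ofBijective f <| (Fintype.bijective_iff_injective_and_card f).2
    ⟨hf, (Fintype.card_le_of_injective f hf).antisymm hcard⟩
  refine ⟨s.map e.symm.toEmbedding, fun u hu v hv huv h => ?_, card_map _⟩
  rw [mem_coe, mem_map_equiv] at hu hv
  exact hs hu hv (e.injective.ne huv) (hadj u v h)

theorem ncard_edgeSet_le_exNum {V β : Type*} [Fintype V] {H : SimpleGraph β}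
    {G : SimpleGraph V} (hG : ¬ ContainsCopy G H) :
    G.edgeSet.ncard ≤ exNum (Fintype.card V) H := by
  classical
  let e := Fintype.equivFin V
  refine le_csSup ⟨(Fintype.card V).choose 2, ?_⟩ ⟨G.map e.toEmbedding, ?_, ?_⟩
  · rintro _ ⟨G', -, rfl⟩
    rw [← coe_edgeFinset, Set.ncard_coe_finset]
    simpa using card_edgeFinset_le_card_choose_two (G := G')
  · rw [containsCopy_iff_isContained] at hG ⊢
    exact (free_congr .refl (Iso.map e G)).1 hG
  · rw [← Nat.card_coe_set_eq, ← Nat.card_coe_set_eq]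
    exact Nat.card_congr (Iso.map e G).mapEdgeSet

section CompleteMinusClique

variable {V : Type*} {W : Finset V}

theorem completeMinusClique_adj {u v : V} :
    (completeMinusClique W).Adj u v ↔ u ≠ v ∧ (u ∉ W ∨ v ∉ W) := by
  rw [completeMinusClique, fromRel_adj]
  tauto

theorem isIndepSet_completeMinusClique (W : Finset V) :
    (completeMinusClique W).IsIndepSet W := fun _ hu _ hv _ h =>
  (completeMinusClique_adj.1 h).2.elim (· hu) (· hv)

variable [Fintype V]

theorem edgeFinset_completeMinusClique [DecidableEq V] [DecidableRel (completeMinusClique W).Adj] :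
    (completeMinusClique W).edgeFinset =
      (⊤ : SimpleGraph V).edgeFinset \ W.offDiag.image Sym2.mk.uncurry := by
  ext ⟨a, b⟩
  simp only [mem_edgeFinset, mem_edgeSet, completeMinusClique_adj, mem_sdiff, top_adj,
    mem_image, mem_offDiag, Prod.exists, Function.uncurry_apply_pair, Sym2.eq_iff]
  grind

theorem ncard_edgeSet_completeMinusClique :
    (completeMinusClique W).edgeSet.ncard = (Fintype.card V).choose 2 - (#W).choose 2 := by
  classical
  have hsub : W.offDiag.image Sym2.mk.uncurry ⊆ (⊤ : SimpleGraph V).edgeFinset := by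
    simp only [subset_iff, mem_image, mem_offDiag, Prod.exists, Function.uncurry_apply_pair,
      mem_edgeFinset, edgeSet_top, Set.mem_compl_iff, Sym2.mem_diagSet, forall_exists_index,
      and_imp]
    rintro _ a b - - hab rfl
    exact hab
  rw [← coe_edgeFinset, Set.ncard_coe_finset, edgeFinset_completeMinusClique,
    card_sdiff_of_subset hsub, card_edgeFinset_top_eq_card_choose_two, Sym2.card_image_offDiag]

end CompleteMinusClique

section CliquesPlusVertex

variable {k m : ℕ} {A : Finset (Fin k × Fin m)}

theorem cliquesPlusVertex_adj_some {p q : Fin k × Fin m} :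
    (cliquesPlusVertex k m A).Adj (some p) (some q) ↔ p ≠ q ∧ p.1 = q.1 := by
  simp [cliquesPlusVertex, fromRel_adj, eq_comm]

theorem card_le_of_isIndepSet_cliquesPlusVertex {s : Finset (Option (Fin k × Fin m))}
    (hs : (cliquesPlusVertex k m A).IsIndepSet s) : #s ≤ k + 1 := by
  have hinj : Set.InjOn (Option.map Prod.fst) (s : Set (Option (Fin k × Fin m))) := by
    rintro (_ | p) hu (_ | q) hv h <;>
      simp only [Option.map_none, Option.map_some, reduceCtorEq, Option.some.injEq] at h
    · rfl
    · by_contra hpq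
      exact hs hu hv hpq (cliquesPlusVertex_adj_some.2 ⟨by simpa using hpq, h⟩)
  simpa using card_le_card_of_injOn _ (fun _ _ => mem_univ _) hinj

theorem not_containsCopy_completeMinusClique_cliquesPlusVertex
    {W : Finset (Option (Fin k × Fin m))} (hW : k + 1 < #W) :
    ¬ ContainsCopy (completeMinusClique W) (cliquesPlusVertex k m A) := fun h => by
  obtain ⟨t, ht, hcard⟩ := h.exists_isIndepSet le_rfl (isIndepSet_completeMinusClique W)
  have := card_le_of_isIndepSet_cliquesPlusVertex ht
  omega

end CliquesPlusVertex

theorem choose_two_add_sub_one_lt {k m δ : ℕ} (hk : 3 ≤ k) (hm : 2 * m = k + 6)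
    (hδ : δ ≤ m - 1) :
    (k * m).choose 2 + δ - 1 < (k * m + 1).choose 2 - (k + 2).choose 2 := by
  have hkm : 2 * (k * m) = k * k + 6 * k := by rw [mul_left_comm, hm]; ring
  have hchoose : (k + 2).choose 2 = (k * k + 3 * k + 2) / 2 := by
    rw [Nat.choose_two_right, show k + 2 - 1 = k + 1 by omega]
    ring_nf
  have hsucc : (k * m + 1).choose 2 = (k * m).choose 2 + k * m := by
    rw [Nat.choose_succ_succ', Nat.choose_one_right, add_comm]
  rw [hsucc, hchoose]
  omega

theorem max_degree_condition_optimal_general (k m δ n : ℕ) (hk : 3 ≤ k) (hm : 2 * m = k + 6)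
    (hn : n = k * (k + 6) / 2 + 1)
    (hδ2 : δ ≤ m - 1)
    (A : Finset (Fin k × Fin m))
    (W : Finset (Option (Fin k × Fin m))) (hW : W.card = k + 2) :
    ¬ ContainsCopy (completeMinusClique W) (cliquesPlusVertex k m A) ∧
    (completeMinusClique W).edgeSet.ncard = n.choose 2 - (k + 2).choose 2 ∧
    n.choose 2 - (k + 2).choose 2 ≤ exNum n (cliquesPlusVertex k m A) ∧
    (n - 1).choose 2 + δ - 1 < n.choose 2 - (k + 2).choose 2 := by
  have hn' : n = k * m + 1 := by
    rw [hn, ← hm, mul_left_comm, Nat.mul_div_cancel_left _ two_pos]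
  have hcard : Fintype.card (Option (Fin k × Fin m)) = n := by simp [hn']
  have hfree := not_containsCopy_completeMinusClique_cliquesPlusVertex (A := A) (by omega : k + 1 < #W)
  have hedges : (completeMinusClique W).edgeSet.ncard = n.choose 2 - (k + 2).choose 2 := by
    rw [ncard_edgeSet_completeMinusClique, hcard, hW]
  refine ⟨hfree, hedges, hedges ▸ hcard ▸ ncard_edgeSet_le_exNum hfree, ?_⟩
  rw [hn', Nat.add_sub_cancel]
  exact choose_two_add_sub_one_lt hk hm hδ2

theorem max_degree_condition_optimal (k m δ n : ℕ) (hk : 3 ≤ k) (hm : 2 * m = k + 6)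
    (hn : n = k * (k + 6) / 2 + 1)
    (hδ1 : 1 ≤ δ) (hδ2 : δ ≤ m - 1)
    (A : Finset (Fin k × Fin m)) (hA : A.card = δ)
    (W : Finset (Option (Fin k × Fin m))) (hW : W.card = k + 2) :
    ¬ ContainsCopy (completeMinusClique W) (cliquesPlusVertex k m A) ∧
    (completeMinusClique W).edgeSet.ncard = n.choose 2 - (k + 2).choose 2 ∧
    n.choose 2 - (k + 2).choose 2 ≤ exNum n (cliquesPlusVertex k m A) ∧
    (n - 1).choose 2 + δ - 1 < n.choose 2 - (k + 2).choose 2 :=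
  max_degree_condition_optimal_general k m δ n hk hm hn hδ2 A W hW
end

section
/- There exists n₀ such that for every n ≥ n₀ the following holds: let 1 ≤ δ ≤ √n/200 and let G be a simple graph on n vertices with exactly n − δ − 1 edges, and let v_1 be a vertex of maximum degree of G. Then there exists an independent set S of G with |S| ≥ δ such that S is disjoint from N[v_1] (i.e., no vertex of S equals or is adjacent to v_1) and every vertex of S has degree smaller than 2√n in G. -/
/-!
Let `L` be the set of vertices of degree at most one outside the closed neighbourhood `N[v]` of a
vertex `v`. In the degree sum, every other vertex outside `N[v]` contributes at least `2`, and the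
vertices of `N[v]` together contribute at least `2 d(v) = 2 (|N[v]| - 1)`, since each neighbour of
`v` has degree at least one. With `n - δ - 1` edges this leaves a degree sum of at most
`2 |L| - 2 δ` on `L`, so `L` spans at most `|L| - δ` edges, and deleting one endpoint of each of
them leaves an independent set of size at least `δ`. Its vertices have degree at most `1 < 2 √n`.
-/

open Finset

namespace SimpleGraph

variable {V : Type*} (G : SimpleGraph V) [DecidableRel G.Adj]

lemma degree_le_sum_degree_neighborFinset [Fintype V] (v : V) :
    G.degree v ≤ ∑ u ∈ G.neighborFinset v, G.degree u := by
  calc G.degree v = ∑ _u ∈ G.neighborFinset v, 1 := by simp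
    _ ≤ ∑ u ∈ G.neighborFinset v, G.degree u := sum_le_sum fun u hu =>
      (G.degree_pos_iff_exists_adj u).2 ⟨v, ((G.mem_neighborFinset v u).1 hu).symm⟩

variable [DecidableEq V]

lemma sum_card_adj_erase_add_two_le {s : Finset V} {u w : V} (hu : u ∈ s) (hw : w ∈ s)
    (huw : G.Adj u w) :
    ∑ x ∈ s.erase u, #{y ∈ s.erase u | G.Adj x y} + 2 ≤ ∑ x ∈ s, #{y ∈ s | G.Adj x y} := by
  -- the pairs `(u, w)` and `(w, u)` are lost
  have hmono : ∀ x, {y ∈ s.erase u | G.Adj x y} ⊆ {y ∈ s | G.Adj x y} :=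
    fun x => filter_subset_filter _ (erase_subset _ _)
  have hw' : w ∈ s.erase u := mem_erase.2 ⟨huw.ne', hw⟩
  have hlt : ∑ x ∈ s.erase u, #{y ∈ s.erase u | G.Adj x y}
      < ∑ x ∈ s.erase u, #{y ∈ s | G.Adj x y} := by
    refine sum_lt_sum (fun x _ => card_le_card (hmono x)) ⟨w, hw', card_lt_card ?_⟩
    exact (ssubset_iff_of_subset (hmono w)).2 ⟨u, by simp [hu, huw.symm]⟩
  have hpos : 0 < #{y ∈ s | G.Adj u y} := card_pos.2 ⟨w, mem_filter.2 ⟨hw, huw⟩⟩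
  rw [← add_sum_erase s _ hu]
  omega

theorem exists_isIndepSet_subset_two_mul_card_le (s : Finset V) :
    ∃ t ⊆ s, G.IsIndepSet t ∧ 2 * #s ≤ 2 * #t + ∑ u ∈ s, #{w ∈ s | G.Adj u w} := by
  induction s using Finset.strongInduction with
  | H s ih =>
    by_cases hs : G.IsIndepSet s
    · exact ⟨s, subset_rfl, hs, by omega⟩
    obtain ⟨u, hu, w, hw, -, huw⟩ : ∃ u ∈ s, ∃ w ∈ s, u ≠ w ∧ G.Adj u w := by
      simpa [IsIndepSet, Set.Pairwise] using hs
    obtain ⟨t, hts, ht, hcard⟩ := ih _ (erase_ssubset hu)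
    have := G.sum_card_adj_erase_add_two_le hu hw huw
    have := card_erase_add_one hu
    exact ⟨t, hts.trans (erase_subset _ _), ht, by omega⟩

variable [Fintype V]

def lowDegreeNonNeighbors (v : V) : Finset V :=
  {u ∈ (insert v (G.neighborFinset v))ᶜ | G.degree u ≤ 1}

lemma mem_lowDegreeNonNeighbors {v u : V} :
    u ∈ G.lowDegreeNonNeighbors v ↔ u ≠ v ∧ ¬G.Adj v u ∧ G.degree u ≤ 1 := by
  simp [lowDegreeNonNeighbors, and_assoc]

theorem two_mul_add_sum_degree_lowDegreeNonNeighbors_le (v : V) {δ : ℕ}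
    (h : #G.edgeFinset + δ + 1 ≤ Fintype.card V) :
    2 * δ + ∑ u ∈ G.lowDegreeNonNeighbors v, G.degree u ≤ 2 * #(G.lowDegreeNonNeighbors v) := by
  set N := insert v (G.neighborFinset v)
  have hvN : v ∉ G.neighborFinset v := by simp
  have hcardN : #N = G.degree v + 1 := by
    rw [card_insert_of_notMem hvN, card_neighborFinset_eq_degree]
  have hsumN : 2 * G.degree v ≤ ∑ u ∈ N, G.degree u := by
    rw [sum_insert hvN]
    linarith [G.degree_le_sum_degree_neighborFinset v]
  have hsumHigh :
      2 * #{u ∈ Nᶜ | ¬G.degree u ≤ 1} ≤ ∑ u ∈ Nᶜ with ¬G.degree u ≤ 1, G.degree u := by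
    rw [mul_comm, ← smul_eq_mul, ← sum_const]
    exact sum_le_sum fun u hu => by rw [mem_filter] at hu; omega
  have hsum := G.sum_degrees_eq_twice_card_edges
  rw [← sum_add_sum_compl N, ← sum_filter_add_sum_filter_not Nᶜ (fun u => G.degree u ≤ 1)] at hsum
  have hcard := card_add_card_compl N
  rw [← card_filter_add_card_filter_not (s := Nᶜ) (fun u => G.degree u ≤ 1)] at hcard
  change 2 * δ + ∑ u ∈ Nᶜ with G.degree u ≤ 1, G.degree u ≤ 2 * #{u ∈ Nᶜ | G.degree u ≤ 1}
  omega

theorem exists_isIndepSet_subset_lowDegreeNonNeighbors (v : V) {δ : ℕ}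
    (h : #G.edgeFinset + δ + 1 ≤ Fintype.card V) :
    ∃ S ⊆ G.lowDegreeNonNeighbors v, G.IsIndepSet S ∧ δ ≤ #S := by
  obtain ⟨S, hSL, hS, hcard⟩ :=
    G.exists_isIndepSet_subset_two_mul_card_le (G.lowDegreeNonNeighbors v)
  have hsum := G.two_mul_add_sum_degree_lowDegreeNonNeighbors_le v h
  have hle : ∑ u ∈ G.lowDegreeNonNeighbors v, #{w ∈ G.lowDegreeNonNeighbors v | G.Adj u w}
      ≤ ∑ u ∈ G.lowDegreeNonNeighbors v, G.degree u := sum_le_sum fun u _ => by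
    rw [← card_neighborFinset_eq_degree]
    exact card_le_card fun w hw => (G.mem_neighborFinset u w).2 (mem_filter.1 hw).2
  exact ⟨S, hSL, hS, by omega⟩

end SimpleGraph

theorem independent_set_avoiding_max_degree_vertex :
    ∃ n₀ : ℕ, ∀ n : ℕ, n₀ ≤ n → ∀ δ : ℕ, 1 ≤ δ → (δ : ℝ) ≤ Real.sqrt n / 200 →
      ∀ (G : SimpleGraph (Fin n)) [DecidableRel G.Adj],
        G.edgeFinset.card = n - δ - 1 →
        ∀ v₁ : Fin n, (∀ u : Fin n, G.degree u ≤ G.degree v₁) →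
          ∃ S : Finset (Fin n),
            (∀ u ∈ S, ∀ w ∈ S, u ≠ w → ¬ G.Adj u w) ∧
            δ ≤ S.card ∧
            (∀ u ∈ S, u ≠ v₁ ∧ ¬ G.Adj v₁ u) ∧
            (∀ u ∈ S, (G.degree u : ℝ) < 2 * Real.sqrt n) := by
  refine ⟨0, fun n _ δ hδ hδn G _ hG v₁ _ => ?_⟩
  have hsqrt : 200 ≤ √(n : ℝ) := by
    have : (1 : ℝ) ≤ δ := by exact_mod_cast hδ
    linarith
  have hδlt : δ + 1 ≤ n := by
    have := Real.mul_self_sqrt (Nat.cast_nonneg (α := ℝ) n)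
    exact_mod_cast (show (δ : ℝ) + 1 ≤ n by nlinarith)
  obtain ⟨S, hSL, hS, hδS⟩ :=
    G.exists_isIndepSet_subset_lowDegreeNonNeighbors v₁ (δ := δ) (by rw [Fintype.card_fin]; omega)
  have hmem := fun u (hu : u ∈ S) => (G.mem_lowDegreeNonNeighbors).1 (hSL hu)
  refine ⟨S, fun u hu w hw hne => hS hu hw hne, hδS, fun u hu => ⟨(hmem u hu).1, (hmem u hu).2.1⟩,
    fun u hu => ?_⟩
  have : (G.degree u : ℝ) ≤ 1 := by exact_mod_cast (hmem u hu).2.2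
  linarith
end

section
/- There exists n₀ such that for every n ≥ n₀ the following holds: let 1 ≤ δ ≤ √n/200, let G be a simple graph on n vertices with exactly n − δ − 1 edges, let v_1, …, v_n be an ordering of its vertices with d(v_1) ≥ d(v_2) ≥ … ≥ d(v_n), and let B be any set of δ vertices each of degree at most 2√n in G. Then for every i with 2 ≤ i ≤ n there exists an independent set S of G with |S| ≥ n/18 such that S is disjoint from N[v_i] ∪ N[B] and every vertex of S has degree at most 10 in G. -/
/-!
Put `a = v₁`, a vertex of maximum degree, `b = vᵢ ≠ a`, and let `W` be the set of vertices of
degree at most 10 outside `N[b] ∪ N[B] ∪ {a}`. Greedily, `W` contains an independent set of size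
at least `|W| / 11`; deleting one endpoint of every edge inside `W` gives one of size at least
`|W| - e(W)`. The edges inside `W`, the at least `d(a) + d(b) - 1 ≥ 2 d(b) - 1` edges at `a` or `b`,
and the edges at the `h` remaining vertices of degree at least 11 (each has at least 9 edges of its
own kind) are disjoint, so `2 e(W) + 4 d(b) + 9 h ≤ 2 |E| + O(1)`. As
`|W| ≥ n - h - d(b) - |N[B]| - O(1)`, adding twice each of the two independence bounds eliminates
both `d(b)` and `h`: `24 |S| ≥ 4 n - 2 |E| - 4 |N[B]| - O(1)`, which is about `2 n` because
`|E| ≤ n` and `|N[B]| ≤ δ (2 √n + 1) ≤ 3 n / 200`.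
-/

open Finset

theorem Sym2.card_filter_mem_le_two {α : Type*} [DecidableEq α] (s : Finset α) (e : Sym2 α) :
    #{x ∈ s | x ∈ e} ≤ 2 := by
  induction e with
  | h a b =>
    refine (card_le_card fun x hx => ?_).trans (card_le_two (a := a) (b := b))
    simpa using (mem_filter.1 hx).2

namespace SimpleGraph

variable {V : Type*} [Fintype V] [DecidableEq V] (G : SimpleGraph V) [DecidableRel G.Adj]

theorem card_insert_neighborFinset_le (c : V) :
    #(insert c (G.neighborFinset c)) ≤ G.degree c + 1 :=
  (card_insert_le _ _).trans_eq (by rw [card_neighborFinset_eq_degree])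

def closedNbhdFinset (C : Finset V) : Finset V :=
  C.biUnion fun c => insert c (G.neighborFinset c)

theorem notMem_closedNbhdFinset {C : Finset V} {u : V} :
    u ∉ G.closedNbhdFinset C ↔ ∀ c ∈ C, u ≠ c ∧ ¬G.Adj c u := by
  simp [closedNbhdFinset]

theorem card_closedNbhdFinset_le (C : Finset V) :
    #(G.closedNbhdFinset C) ≤ ∑ c ∈ C, (G.degree c + 1) :=
  card_biUnion_le.trans <| sum_le_sum fun c _ => G.card_insert_neighborFinset_le c

theorem card_closedNbhdFinset_insert_le (b : V) (C : Finset V) :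
    #(G.closedNbhdFinset (insert b C)) ≤ G.degree b + 1 + ∑ c ∈ C, (G.degree c + 1) := by
  rw [closedNbhdFinset, biUnion_insert]
  exact (card_union_le _ _).trans
    (add_le_add (G.card_insert_neighborFinset_le b) (G.card_closedNbhdFinset_le C))

theorem exists_isIndepSet_subset_card_le_mul {k : ℕ} (W : Finset V)
    (hW : ∀ u ∈ W, G.degree u ≤ k) :
    ∃ S ⊆ W, G.IsIndepSet (S : Set V) ∧ #W ≤ (k + 1) * #S := by
  induction W using Finset.strongInduction with
  | H W ih =>
    obtain rfl | ⟨w, hw⟩ := W.eq_empty_or_nonempty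
    · exact ⟨∅, empty_subset _, by simp, by simp⟩
    set N := insert w (G.neighborFinset w)
    have hwN : w ∈ N := mem_insert_self _ _
    obtain ⟨S, hSW, hS, hcard⟩ :=
      ih (W \ N) ⟨sdiff_subset, fun h => (mem_sdiff.1 (h hw)).2 hwN⟩
        fun u hu => hW u (mem_sdiff.1 hu).1
    have hSN : ∀ u ∈ S, u ∉ N := fun u hu => (mem_sdiff.1 (hSW hu)).2
    refine ⟨insert w S, insert_subset hw (hSW.trans sdiff_subset), ?_, ?_⟩
    · rw [coe_insert]
      refine hS.insert fun u hu _ => ?_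
      have hwu : ¬G.Adj w u := fun h =>
        hSN u hu (mem_insert_of_mem ((G.mem_neighborFinset w u).2 h))
      exact ⟨hwu, fun h => hwu h.symm⟩
    · calc #W ≤ #(W \ N) + #N := card_le_card_sdiff_add_card
        _ ≤ (k + 1) * #S + (k + 1) :=
          add_le_add hcard ((G.card_insert_neighborFinset_le w).trans (Nat.succ_le_succ (hW w hw)))
        _ = (k + 1) * #(insert w S) := by
          rw [card_insert_of_notMem fun h => hSN w h hwN]; ring

theorem exists_isIndepSet_subset_card_le_add (W : Finset V) :
    ∃ S ⊆ W, G.IsIndepSet (S : Set V) ∧ #W ≤ #S + #(G.edgeFinset ∩ W.sym2) := by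
  set T := (G.edgeFinset ∩ W.sym2).image fun e => e.out.1
  refine ⟨W \ T, sdiff_subset, ?_, ?_⟩
  · intro u hu w hw _ hadj
    simp only [coe_sdiff, Set.mem_sdiff, mem_coe] at hu hw
    have hT : s(u, w).out.1 ∈ T :=
      mem_image_of_mem _ (mem_inter.2 ⟨G.mem_edgeFinset.2 hadj, mk_mem_sym2_iff.2 ⟨hu.1, hw.1⟩⟩)
    rcases Sym2.mem_iff.1 (Sym2.out_fst_mem s(u, w)) with h | h
    · exact hu.2 (h ▸ hT)
    · exact hw.2 (h ▸ hT)
  · exact card_le_card_sdiff_add_card.trans (Nat.add_le_add_left card_image_le _)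

theorem exists_isIndepSet_subset_of_degree_le {k : ℕ} (W : Finset V)
    (hW : ∀ u ∈ W, G.degree u ≤ k) :
    ∃ S ⊆ W, G.IsIndepSet (S : Set V) ∧ #W ≤ (k + 1) * #S ∧
      #W ≤ #S + #(G.edgeFinset ∩ W.sym2) := by
  obtain ⟨S₁, hS₁W, hS₁, h₁⟩ := G.exists_isIndepSet_subset_card_le_mul W hW
  obtain ⟨S₂, hS₂W, hS₂, h₂⟩ := G.exists_isIndepSet_subset_card_le_add W
  rcases le_total #S₁ #S₂ with h | h
  · exact ⟨S₂, hS₂W, hS₂, h₁.trans (Nat.mul_le_mul_left _ h), h₂⟩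
  · exact ⟨S₁, hS₁W, hS₁, h₁, h₂.trans (by omega)⟩

theorem card_incidenceFinset_inter_le_one {a b : V} (hab : a ≠ b) :
    #(G.incidenceFinset a ∩ G.incidenceFinset b) ≤ 1 := by
  refine card_le_one.2 fun e he f hf => ?_
  simp only [mem_inter, mem_incidenceFinset] at he hf
  exact (G.incidenceSet_inter_incidenceSet_subset hab he).trans
    (G.incidenceSet_inter_incidenceSet_subset hab hf).symm

theorem degree_add_degree_le_card_incidenceFinset_union {a b : V} (hab : a ≠ b) :
    G.degree a + G.degree b ≤ #(G.incidenceFinset a ∪ G.incidenceFinset b) + 1 := by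
  rw [← card_incidenceFinset_eq_degree, ← card_incidenceFinset_eq_degree,
    ← card_union_add_card_inter]
  exact Nat.add_le_add_left (G.card_incidenceFinset_inter_le_one hab) _

theorem two_mul_card_edgeFinset_inter_sym2_add_le {k : ℕ} {W X : Finset V} {a b : V}
    (hab : a ≠ b) (ha : a ∉ W) (hb : b ∉ W)
    (hX : ∀ x ∈ X, x ∉ W ∧ x ≠ a ∧ x ≠ b ∧ k + 2 ≤ G.degree x) :
    2 * #(G.edgeFinset ∩ W.sym2) + 2 * (G.degree a + G.degree b) + k * #X ≤
      2 * #G.edgeFinset + 2 := by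
  set EW := G.edgeFinset ∩ W.sym2
  set I := G.incidenceFinset a ∪ G.incidenceFinset b
  set R := G.edgeFinset \ (EW ∪ I)
  have hEW : ∀ e ∈ EW, ∀ x ∈ e, x ∈ W := fun e he => mem_sym2_iff.1 (mem_inter.1 he).2
  have hdisj : Disjoint EW I := by
    refine Finset.disjoint_left.2 fun e he heI => ?_
    rcases mem_union.1 heI with h | h
    · exact ha (hEW e he a ((G.mem_incidenceFinset _ e).1 h).2)
    · exact hb (hEW e he b ((G.mem_incidenceFinset _ e).1 h).2)
  have hsplit : #R + (#EW + #I) = #G.edgeFinset := by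
    rw [← card_union_of_disjoint hdisj]
    refine card_sdiff_add_card_eq_card (union_subset inter_subset_left (union_subset ?_ ?_)) <;>
      exact G.incidenceFinset_subset _
  have hR : ∀ x ∈ X, k ≤ #{e ∈ R | x ∈ e} := by
    intro x hx
    obtain ⟨hxW, hxa, hxb, hdeg⟩ := hX x hx
    have hsub : G.incidenceFinset x \ I ⊆ {e ∈ R | x ∈ e} := by
      intro e he
      obtain ⟨hex, heI⟩ := mem_sdiff.1 he
      rw [incidenceFinset_eq_filter, mem_filter] at hex
      exact mem_filter.2 ⟨mem_sdiff.2 ⟨hex.1, by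
        simp only [mem_union, not_or]; exact ⟨fun h => hxW (hEW e h x hex.2), heI⟩⟩, hex.2⟩
    have hI : #(G.incidenceFinset x ∩ I) ≤ 2 := by
      rw [inter_union_distrib_left]
      exact (card_union_le _ _).trans (add_le_add (G.card_incidenceFinset_inter_le_one hxa)
        (G.card_incidenceFinset_inter_le_one hxb))
    have := card_sdiff_add_card_inter (G.incidenceFinset x) I
    rw [card_incidenceFinset_eq_degree] at this
    exact le_trans (by omega) (card_le_card hsub)
  have hcount : #X * k ≤ #R * 2 :=
    card_mul_le_card_mul (fun x e => x ∈ e) hR fun e _ => Sym2.card_filter_mem_le_two X e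
  have hab' := G.degree_add_degree_le_card_incidenceFinset_union hab
  linarith

theorem exists_isIndepSet_disjoint_closedNbhdFinset {a b : V} (hab : a ≠ b)
    (hba : G.degree b ≤ G.degree a) (B : Finset V) :
    ∃ S : Finset V, G.IsIndepSet (S : Set V) ∧ Disjoint S (G.closedNbhdFinset (insert b B)) ∧
      (∀ u ∈ S, G.degree u ≤ 10) ∧
      4 * Fintype.card V ≤ 24 * #S + 2 * #G.edgeFinset + 4 * ∑ c ∈ B, (G.degree c + 1) + 10 := by
  set N := G.closedNbhdFinset (insert b B)
  set A := insert a N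
  set W := Aᶜ.filter fun u => G.degree u ≤ 10
  set X := Aᶜ.filter fun u => ¬G.degree u ≤ 10
  have hbN : b ∈ N := by
    by_contra h
    exact ((G.notMem_closedNbhdFinset.1 h) b (mem_insert_self b B)).1 rfl
  have hcard : #W + #X + #A = Fintype.card V := by
    rw [card_filter_add_card_filter_not, card_compl_add_card]
  have hA : #A ≤ G.degree b + 1 + ∑ c ∈ B, (G.degree c + 1) + 1 :=
    (card_insert_le _ _).trans (Nat.succ_le_succ (G.card_closedNbhdFinset_insert_le b B))
  obtain ⟨S, hSW, hS, h11, hcov⟩ :=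
    G.exists_isIndepSet_subset_of_degree_le W fun u hu => (mem_filter.1 hu).2
  have hbudget := G.two_mul_card_edgeFinset_inter_sym2_add_le (k := 9) (W := W) (X := X) hab
    (by simp [W, A]) (by simp [W, A, hbN]) fun x hx => by
      simp only [X, W, A, mem_filter, mem_compl, mem_insert, not_or] at hx ⊢
      exact ⟨fun h => hx.2 h.2, hx.1.1, fun h => hx.1.2 (h ▸ hbN), by omega⟩
  refine ⟨S, hS, Finset.disjoint_left.2 fun u hu huN => ?_,
    fun u hu => (mem_filter.1 (hSW hu)).2, by omega⟩
  exact mem_compl.1 (mem_filter.1 (hSW hu)).1 (mem_insert_of_mem huN)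

end SimpleGraph

theorem sum_add_one_le_of_card_le_sqrt {ι : Type*} {s : Finset ι} {f : ι → ℝ} {x : ℝ}
    (hx : 1 ≤ x) (hs : (#s : ℝ) ≤ √x / 200) (hf : ∀ i ∈ s, f i ≤ 2 * √x) :
    ∑ i ∈ s, (f i + 1) ≤ 3 * x / 200 := by
  have hsqrt : √x ≤ x := Real.sqrt_le_self_iff.2 (Or.inr hx)
  have hsq : √x * √x = x := Real.mul_self_sqrt (by linarith)
  calc ∑ i ∈ s, (f i + 1) ≤ ∑ i ∈ s, (2 * √x + 1) := sum_le_sum fun i hi => by linarith [hf i hi]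
    _ = #s * (2 * √x + 1) := by rw [sum_const, nsmul_eq_mul]
    _ ≤ √x / 200 * (2 * √x + 1) := by gcongr
    _ ≤ 3 * x / 200 := by nlinarith

theorem large_independent_sets_avoiding_neighborhoods :
    ∃ n₀ : ℕ, ∀ n : ℕ, n₀ ≤ n → ∀ δ : ℕ, 1 ≤ δ → (δ : ℝ) ≤ Real.sqrt n / 200 →
      ∀ (G : SimpleGraph (Fin n)) [DecidableRel G.Adj],
        G.edgeFinset.card = n - δ - 1 →
        ∀ v : Fin n → Fin n, Function.Bijective v →
          (∀ i j : Fin n, i ≤ j → G.degree (v j) ≤ G.degree (v i)) →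
          ∀ B : Finset (Fin n), B.card = δ →
            (∀ b ∈ B, (G.degree b : ℝ) ≤ 2 * Real.sqrt n) →
            -- for every `i` with (1-indexed) `2 ≤ i ≤ n`, i.e. 0-indexed `1 ≤ i`:
            ∀ i : Fin n, 1 ≤ (i : ℕ) →
              ∃ S : Finset (Fin n),
                (∀ u ∈ S, ∀ w ∈ S, u ≠ w → ¬ G.Adj u w) ∧
                (n : ℝ) / 18 ≤ S.card ∧
                (∀ u ∈ S, u ≠ v i ∧ ¬ G.Adj (v i) u) ∧
                (∀ u ∈ S, u ∉ B ∧ ∀ b ∈ B, ¬ G.Adj b u) ∧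
                (∀ u ∈ S, G.degree u ≤ 10) := by
  refine ⟨20, fun n hn δ _ hδ G _ hE v hv hdeg B hB hBdeg i hi => ?_⟩
  have hne : v ⟨0, i.pos⟩ ≠ v i := hv.injective.ne (Fin.ne_of_val_ne (Nat.ne_of_lt hi))
  obtain ⟨S, hS, hSN, hSdeg, hcard⟩ :=
    G.exists_isIndepSet_disjoint_closedNbhdFinset hne (hdeg _ i (Nat.zero_le _)) B
  have hn : (20 : ℝ) ≤ n := by exact_mod_cast hn
  have hBsum : ∑ c ∈ B, ((G.degree c : ℝ) + 1) ≤ 3 * n / 200 :=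
    sum_add_one_le_of_card_le_sqrt (by linarith) (hB ▸ hδ) hBdeg
  have hE' : (#G.edgeFinset : ℝ) ≤ n := by exact_mod_cast hE.trans_le (by omega)
  have hcard' : (4 * n : ℝ) ≤
      24 * #S + 2 * #G.edgeFinset + 4 * ∑ c ∈ B, ((G.degree c : ℝ) + 1) + 10 := by
    exact_mod_cast Fintype.card_fin n ▸ hcard
  have hSN' (u) (hu : u ∈ S) : (u ≠ v i ∧ ¬G.Adj (v i) u) ∧ ∀ b ∈ B, u ≠ b ∧ ¬G.Adj b u := by
    simpa only [forall_mem_insert] using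
      G.notMem_closedNbhdFinset.1 (Finset.disjoint_left.1 hSN hu)
  refine ⟨S, fun u hu w hw huw => hS hu hw huw, by linarith, fun u hu => (hSN' u hu).1,
    fun u hu => ⟨fun h => ((hSN' u hu).2 u h).1 rfl, fun b hb => ((hSN' u hu).2 b hb).2⟩, hSdeg⟩
end

section
/- Let n ≥ 6 and let H be a simple graph on n vertices containing a vertex v of degree exactly 2 whose two neighbors x and y are adjacent in H, and in which every vertex other than v has degree at least 3. Let T be the graph obtained from the complete graph K_n by deleting the edge set of a star with n−3 edges (a vertex a joined to all vertices except two vertices b and c) together with the single edge {b,c}. Then T has C(n−1,2) + 1 edges and contains no subgraph isomorphic to H. -/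
/-- The graph obtained from the complete graph by deleting the star consisting of all
edges from `a` to vertices other than `b` and `c`, together with the edge `{b, c}`.
Thus `a` is adjacent exactly to `b` and `c`, and `b`, `c` are not adjacent. -/
def completeMinusStarMinusEdge {V : Type*} (a b c : V) : SimpleGraph V :=
  SimpleGraph.fromRel (fun u w =>
    (u = a → w = b ∨ w = c) ∧ (w = a → u = b ∨ u = c) ∧
    ¬(u = b ∧ w = c) ∧ ¬(u = c ∧ w = b))

/-!
In `completeMinusStarMinusEdge a b c` the vertex `a` has degree 2 and its neighbours `b`, `c`
are not adjacent, while every other vertex misses exactly one other vertex and so has degree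
`n - 2`; the handshake lemma gives `2 + (n - 1)(n - 2)` for twice the number of edges.
A copy of `H` uses all `n` vertices, so some vertex of `H` is sent to `a`. It has degree at
most 2, hence it is `v`, and the triangle `v x y` would be sent to a triangle through `a`.
-/

open Finset

namespace SimpleGraph

variable {V W : Type*}

lemma degree_le_degree_of_injective_hom (G : SimpleGraph V) (H : SimpleGraph W)
    [Fintype V] [Fintype W] [DecidableRel G.Adj] [DecidableRel H.Adj]
    {f : W → V} (hf : Function.Injective f) (hadj : ∀ u w, H.Adj u w → G.Adj (f u) (f w))
    (u : W) : H.degree u ≤ G.degree (f u) := by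
  classical
  rw [← card_neighborFinset_eq_degree, ← card_neighborFinset_eq_degree,
    ← card_image_of_injective _ hf]
  refine card_le_card fun w hw => ?_
  obtain ⟨z, hz, rfl⟩ := mem_image.mp hw
  exact (mem_neighborFinset _ _ _).mpr (hadj u z ((mem_neighborFinset _ _ _).mp hz))

lemma degree_eq_card_sub_two [Fintype V] [DecidableEq V] (G : SimpleGraph V)
    [DecidableRel G.Adj] {u s : V} (hsu : s ≠ u) (h : ∀ w, G.Adj u w ↔ w ≠ u ∧ w ≠ s) :
    G.degree u = Fintype.card V - 2 := by
  have hnbhd : G.neighborFinset u = univ \ {u, s} := by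
    ext w
    simp [h, not_or]
  rw [← card_neighborFinset_eq_degree, hnbhd, card_univ_sdiff, card_pair hsu.symm]

theorem not_containsCopy_of_degree_lt_three (G : SimpleGraph V) (H : SimpleGraph W)
    [Fintype V] [Fintype W] [DecidableRel G.Adj] [DecidableRel H.Adj]
    (hcard : Fintype.card V ≤ Fintype.card W) {a : V} (ha : G.degree a < 3)
    (hfree : ∀ w₁ w₂, G.Adj a w₁ → G.Adj a w₂ → ¬ G.Adj w₁ w₂)
    {v x y : W} (hvx : H.Adj v x) (hvy : H.Adj v y) (hxy : H.Adj x y)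
    (hdeg : ∀ u, u ≠ v → 3 ≤ H.degree u) : ¬ ContainsCopy G H := by
  rintro ⟨f, hf, hadj⟩
  obtain ⟨u, rfl⟩ := ((Fintype.bijective_iff_injective_and_card f).mpr
    ⟨hf, le_antisymm (Fintype.card_le_of_injective f hf) hcard⟩).surjective a
  obtain rfl : u = v := by
    by_contra hne
    have := degree_le_degree_of_injective_hom G H hf hadj u
    have := hdeg u hne
    omega
  exact hfree _ _ (hadj _ _ hvx) (hadj _ _ hvy) (hadj _ _ hxy)

end SimpleGraph

section completeMinusStarMinusEdge

open SimpleGraph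

variable {V : Type*} {a b c : V}

lemma completeMinusStarMinusEdge_adj {u w : V} :
    (completeMinusStarMinusEdge a b c).Adj u w ↔ u ≠ w ∧
      (u = a → w = b ∨ w = c) ∧ (w = a → u = b ∨ u = c) ∧
      ¬(u = b ∧ w = c) ∧ ¬(u = c ∧ w = b) := by
  simp only [completeMinusStarMinusEdge, fromRel_adj]
  tauto

instance [DecidableEq V] : DecidableRel (completeMinusStarMinusEdge a b c).Adj := fun _ _ =>
  decidable_of_iff' _ completeMinusStarMinusEdge_adj

lemma completeMinusStarMinusEdge_adj_left (hab : a ≠ b) (hac : a ≠ c) {w : V} :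
    (completeMinusStarMinusEdge a b c).Adj a w ↔ w = b ∨ w = c := by
  rw [completeMinusStarMinusEdge_adj]
  grind

lemma exists_adj_iff_ne_and_ne (hbc : b ≠ c) {u : V} (hu : u ≠ a) :
    ∃ s ≠ u, ∀ w, (completeMinusStarMinusEdge a b c).Adj u w ↔ w ≠ u ∧ w ≠ s := by
  simp only [completeMinusStarMinusEdge_adj]
  by_cases hub : u = b
  · exact ⟨c, hub ▸ hbc.symm, fun w => by grind⟩
  by_cases huc : u = c
  · exact ⟨b, huc ▸ hbc, fun w => by grind⟩
  · exact ⟨a, hu.symm, fun w => by grind⟩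

lemma completeMinusStarMinusEdge_not_adj_of_adj_left (hab : a ≠ b) (hac : a ≠ c) {w₁ w₂ : V}
    (h₁ : (completeMinusStarMinusEdge a b c).Adj a w₁)
    (h₂ : (completeMinusStarMinusEdge a b c).Adj a w₂) :
    ¬ (completeMinusStarMinusEdge a b c).Adj w₁ w₂ := by
  rw [completeMinusStarMinusEdge_adj_left hab hac] at h₁ h₂
  rw [completeMinusStarMinusEdge_adj]
  grind

variable [Fintype V] [DecidableEq V]

lemma degree_completeMinusStarMinusEdge_left (hab : a ≠ b) (hac : a ≠ c) (hbc : b ≠ c) :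
    (completeMinusStarMinusEdge a b c).degree a = 2 := by
  have hnbhd : (completeMinusStarMinusEdge a b c).neighborFinset a = {b, c} := by
    ext w
    simp [completeMinusStarMinusEdge_adj_left hab hac]
  rw [← card_neighborFinset_eq_degree, hnbhd, card_pair hbc]

lemma degree_completeMinusStarMinusEdge_of_ne (hbc : b ≠ c) {u : V} (hu : u ≠ a) :
    (completeMinusStarMinusEdge a b c).degree u = Fintype.card V - 2 := by
  obtain ⟨s, hsu, hs⟩ := exists_adj_iff_ne_and_ne hbc hu
  exact degree_eq_card_sub_two _ hsu hs

lemma card_edgeFinset_completeMinusStarMinusEdge (hab : a ≠ b) (hac : a ≠ c) (hbc : b ≠ c) :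
    #(completeMinusStarMinusEdge a b c).edgeFinset = (Fintype.card V - 1).choose 2 + 1 := by
  have hsum := (completeMinusStarMinusEdge a b c).sum_degrees_eq_twice_card_edges
  rw [← add_sum_erase _ _ (mem_univ a), degree_completeMinusStarMinusEdge_left hab hac hbc,
    sum_congr rfl fun u hu => degree_completeMinusStarMinusEdge_of_ne hbc
      (ne_of_mem_erase hu), sum_const, card_erase_of_mem (mem_univ a), card_univ,
    smul_eq_mul] at hsum
  have hchoose : (Fintype.card V - 1).choose 2 * 2 =
      (Fintype.card V - 1) * (Fintype.card V - 2) := by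
    rw [Nat.choose_two_right, Nat.div_mul_cancel (Nat.even_mul_pred_self _).two_dvd]
    rfl
  lia

end completeMinusStarMinusEdge

theorem second_extremal_graph_general (n : ℕ)
    (H : SimpleGraph (Fin n)) [DecidableRel H.Adj]
    (v x y : Fin n) (hvx : H.Adj v x) (hvy : H.Adj v y)
    (hadjxy : H.Adj x y)
    (hdeg : ∀ u : Fin n, u ≠ v → 3 ≤ H.degree u)
    (a b c : Fin n) (hab : a ≠ b) (hac : a ≠ c) (hbc : b ≠ c) :
    (completeMinusStarMinusEdge a b c).edgeSet.ncard = (n - 1).choose 2 + 1 ∧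
    ¬ ContainsCopy (completeMinusStarMinusEdge a b c) H := by
  constructor
  · rw [← SimpleGraph.coe_edgeFinset, Set.ncard_coe_finset,
      card_edgeFinset_completeMinusStarMinusEdge hab hac hbc, Fintype.card_fin]
  · refine SimpleGraph.not_containsCopy_of_degree_lt_three _ H le_rfl ?_
      (fun _ _ => completeMinusStarMinusEdge_not_adj_of_adj_left hab hac) hvx hvy hadjxy hdeg
    rw [degree_completeMinusStarMinusEdge_left hab hac hbc]
    norm_num

theorem second_extremal_graph (n : ℕ) (hn : 6 ≤ n)
    (H : SimpleGraph (Fin n)) [DecidableRel H.Adj]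
    (v x y : Fin n) (hxy : x ≠ y) (hvx : H.Adj v x) (hvy : H.Adj v y)
    (hdegv : H.degree v = 2) (hadjxy : H.Adj x y)
    (hdeg : ∀ u : Fin n, u ≠ v → 3 ≤ H.degree u)
    (a b c : Fin n) (hab : a ≠ b) (hac : a ≠ c) (hbc : b ≠ c) :
    (completeMinusStarMinusEdge a b c).edgeSet.ncard = (n - 1).choose 2 + 1 ∧
    ¬ ContainsCopy (completeMinusStarMinusEdge a b c) H :=
  second_extremal_graph_general n H v x y hvx hvy hadjxy hdeg a b c hab hac hbc
end

section
/- There exists s₀ such that for every integer s ≥ s₀ the following holds. Let n = 1 + 5s and let H be the 3-uniform hypergraph described in the context. Then ex(n−1, 𝓛) = 0, where 𝓛 = {H(v) : v a vertex of H} is the set of all links of H, and ex(n,H) ≥ C(n−2,3) + (4/3)·C(n−2,2) = C(n−1,3) + (1/3)·C(n−2,2) > C(n−1,3) + ex(n−1, 𝓛). -/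
/-!
The lower bound on `ex(n, H)` comes from the following 3-graph on `n` vertices: two apex
vertices over `n - 2` base vertices carrying the Turán graph `T(n - 2, 3)`; its edges are all
triples of base vertices and all triples made of an apex and an edge of `T(n - 2, 3)`. Since `H`
has exactly `n` vertices, a copy of `H` would be a bijection, so some vertex of some `Vᵢ` lands
on an apex; the other four vertices of `Vᵢ` would then span a `K₄` in `T(n - 2, 3)`. Each apex
contributes `e(T(n - 2, 3)) ≥ (2/3) C(n - 2, 2)` edges.

For the links: the link of `x` is the single edge `uv`, which every graph on `n - 1` vertices
with at least one edge contains, so `ex(n - 1, 𝓛) = 0`.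
-/

/-- A 3-uniform hypergraph (given by its set of edges) `TG` contains a copy of `TH`:
there is an injection of vertices mapping every edge of `TH` to an edge of `TG`. -/
def Contains3 {α β : Type*} [DecidableEq α] (TG : Set (Finset α)) (TH : Set (Finset β)) :
    Prop :=
  ∃ f : β → α, Function.Injective f ∧ ∀ e ∈ TH, e.image f ∈ TG

/-- The edges of the 3-uniform hypergraph `H` on `V₁ ∪ ⋯ ∪ V_s ∪ {x}` (vertex `none`
is `x` and vertex `some (i, j)` is the `j`-th element of `Vᵢ`): all 3-element subsets
of each 5-element set `Vᵢ`, together with one additional edge `{x, u, v}` with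
`u, v ∈ V_{i₁}`. -/
def HEdges (s : ℕ) (i₁ : Fin s) (u v : Fin 5) : Set (Finset (Option (Fin s × Fin 5))) :=
  {e | (e.card = 3 ∧ ∃ i : Fin s, ∀ w ∈ e, ∃ j : Fin 5, w = some (i, j)) ∨
       e = {none, some (i₁, u), some (i₁, v)}}

/-- The link of a vertex `w` in a 3-uniform hypergraph with edge set `E`: the graph on
the remaining vertices in which `a, b` are adjacent iff `{w, a, b} ∈ E`. -/
def link {V : Type*} [DecidableEq V] (E : Set (Finset V)) (w : V) :
    SimpleGraph {z : V // z ≠ w} :=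
  SimpleGraph.fromRel (fun a b => ({w, a.val, b.val} : Finset V) ∈ E)

/-- `ex(m, 𝓛)` for the family `𝓛` of all links of the hypergraph with edge set `E`:
the maximum number of edges of a graph on `m` vertices containing no copy of any link. -/
noncomputable def exLinks (m : ℕ) {V : Type*} [DecidableEq V] (E : Set (Finset V)) : ℕ :=
  sSup {c | ∃ G : SimpleGraph (Fin m),
    (∀ w : V, ¬ ContainsCopy G (link E w)) ∧ c = G.edgeSet.ncard}

/-- `ex(m, H)` for a 3-uniform hypergraph `H` with edge set `E`: the maximum number of
edges of a 3-uniform hypergraph on `m` vertices containing no copy of `H`. -/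
noncomputable def ex3 (m : ℕ) {V : Type*} (E : Set (Finset V)) : ℕ :=
  sSup {c | ∃ T : Set (Finset (Fin m)),
    (∀ e ∈ T, e.card = 3) ∧ ¬ Contains3 T E ∧ c = T.ncard}

open Finset

theorem containsCopy_of_adj {α β : Type*} [DecidableEq α] {G : SimpleGraph α}
    {H : SimpleGraph β} (e : β ↪ α) {p q : β} (hpq : p ≠ q)
    (hH : ∀ x y, H.Adj x y → s(x, y) = s(p, q)) {a b : α} (hab : G.Adj a b) :
    ContainsCopy G H := by
  set σ := Equiv.swap (e p) a
  set τ := Equiv.swap (σ (e q)) b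
  have hσq : σ (e q) ≠ a := by
    rw [← Equiv.swap_apply_left (e p) a]
    exact σ.injective.ne (e.injective.ne hpq.symm)
  have hp : τ (σ (e p)) = a := by
    rw [Equiv.swap_apply_left]
    exact Equiv.swap_apply_of_ne_of_ne hσq.symm hab.ne
  have hq : τ (σ (e q)) = b := Equiv.swap_apply_left _ _
  refine ⟨fun x => τ (σ (e x)), τ.injective.comp (σ.injective.comp e.injective),
    fun x y hxy => ?_⟩
  rcases Sym2.eq_iff.mp (hH x y hxy) with ⟨rfl, rfl⟩ | ⟨rfl, rfl⟩
  · simpa only [hp, hq] using hab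
  · simpa only [hp, hq] using hab.symm

theorem exLinks_eq_zero {V : Type*} [Fintype V] [DecidableEq V] {m : ℕ}
    (hm : Fintype.card V ≤ m + 1) {E : Set (Finset V)} {w : V} {p q : {z // z ≠ w}}
    (hpq : p ≠ q) (hlink : ∀ a b, (link E w).Adj a b → s(a, b) = s(p, q)) :
    exLinks m E = 0 := by
  refine Nat.eq_zero_of_le_zero (csSup_le' ?_)
  rintro _ ⟨G, hG, rfl⟩
  by_contra! hpos
  obtain ⟨e, he⟩ := Set.nonempty_of_ncard_ne_zero hpos.ne'
  induction e using Sym2.ind with | _ a b => ?_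
  obtain ⟨emb⟩ := Function.Embedding.nonempty_of_card_le
    (α := {z // z ≠ w}) (β := Fin m) (by simp [Fintype.card_subtype_compl]; omega)
  exact hG w (containsCopy_of_adj emb hpq hlink he)

theorem ncard_le_ex3 {α V : Type*} [Fintype α] [DecidableEq α] {n : ℕ} (eα : α ≃ Fin n)
    {E : Set (Finset V)} {T : Set (Finset α)} (hT : ∀ t ∈ T, t.card = 3)
    (hfree : ¬ Contains3 T E) : T.ncard ≤ ex3 n E := by
  have hbdd : BddAbove {c | ∃ T : Set (Finset (Fin n)),
      (∀ e ∈ T, e.card = 3) ∧ ¬ Contains3 T E ∧ c = T.ncard} :=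
    ⟨Nat.card (Finset (Fin n)), by rintro _ ⟨T', -, -, rfl⟩; exact Set.ncard_le_card T'⟩
  refine le_csSup hbdd ⟨map eα.toEmbedding '' T, ?_, ?_,
    (Set.ncard_image_of_injective _ (map_injective _)).symm⟩
  · rintro _ ⟨t, ht, rfl⟩
    rw [card_map, hT t ht]
  · rintro ⟨f, hf, hmap⟩
    refine hfree ⟨eα.symm ∘ f, eα.symm.injective.comp hf, fun e he => ?_⟩
    obtain ⟨t, ht, hte⟩ := hmap e he
    rw [← image_image, ← hte, map_eq_image, image_image]
    simpa using ht

section HEdges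

variable {s : ℕ} {i₁ : Fin s} {u v : Fin 5}

theorem link_HEdges_none_adj {a b : {z : Option (Fin s × Fin 5) // z ≠ none}}
    (hab : (link (HEdges s i₁ u v) none).Adj a b) :
    s(a, b) =
      s(⟨some (i₁, u), Option.some_ne_none _⟩, ⟨some (i₁, v), Option.some_ne_none _⟩) := by
  rw [link, SimpleGraph.fromRel_adj] at hab
  obtain ⟨hne, hmem⟩ := hab
  have hpair : ({none, a.1, b.1} : Finset _) = {none, some (i₁, u), some (i₁, v)} := by
    rcases hmem with (⟨-, i, h⟩ | h) | (⟨-, i, h⟩ | h)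
    · simpa using h none (by simp)
    · exact h
    · simpa using h none (by simp)
    · rwa [pair_comm]
  have hmem_pair : ∀ z : {z : Option (Fin s × Fin 5) // z ≠ none},
      z.1 ∈ ({none, a.1, b.1} : Finset _) → z.1 = some (i₁, u) ∨ z.1 = some (i₁, v) := by
    intro z hz
    simpa [hpair, z.2] using hz
  rcases hmem_pair a (by simp) with ha | ha <;> rcases hmem_pair b (by simp) with hb | hb
  · exact absurd (Subtype.ext (ha.trans hb.symm)) hne
  · exact Sym2.eq_iff.mpr (Or.inl ⟨Subtype.ext ha, Subtype.ext hb⟩)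
  · exact Sym2.eq_iff.mpr (Or.inr ⟨Subtype.ext ha, Subtype.ext hb⟩)
  · exact absurd (Subtype.ext (ha.trans hb.symm)) hne

theorem triple_mem_HEdges (k : Fin s) {a b c : Fin 5} (hab : a ≠ b) (hac : a ≠ c)
    (hbc : b ≠ c) : {some (k, a), some (k, b), some (k, c)} ∈ HEdges s i₁ u v := by
  refine Or.inl ⟨?_, k, ?_⟩
  · rw [card_insert_of_notMem (by simp [hab, hac]), card_pair (by simp [hbc])]
  · simp

end HEdges

section ApexTriple

variable {β ι : Type*} [DecidableEq β] [DecidableEq ι]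

def apexTriple (i : ι) (z : Sym2 β) : Finset (β ⊕ ι) :=
  insert (.inr i) (z.toFinset.map .inl)

theorem apexTriple_mk (i : ι) (a b : β) :
    apexTriple i s(a, b) = {.inr i, .inl a, .inl b} := by
  simp [apexTriple, Sym2.toFinset_mk_eq]

theorem apexTriple_injective :
    Function.Injective fun p : ι × Sym2 β => apexTriple p.1 p.2 := by
  rintro ⟨i, z⟩ ⟨j, w⟩ h
  simp only [apexTriple, Finset.ext_iff, mem_insert, mem_map, Sym2.mem_toFinset] at h
  have hij : i = j := by simpa using (h (.inr i)).mp (Or.inl rfl)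
  subst hij
  simp only [Prod.mk.injEq, true_and]
  ext a
  simpa using h (.inl a)

end ApexTriple

def apexCone {β : Type*} [Fintype β] [DecidableEq β] (G : SimpleGraph β) [DecidableRel G.Adj]
    (ι : Type*) [Fintype ι] [DecidableEq ι] : Finset (Finset (β ⊕ ι)) :=
  (univ.powersetCard 3).map (mapEmbedding .inl).toEmbedding ∪
    (univ ×ˢ G.edgeFinset).image fun p => apexTriple p.1 p.2

section ApexCone

variable {β ι : Type*} [Fintype β] [DecidableEq β] [Fintype ι] [DecidableEq ι]
  {G : SimpleGraph β} [DecidableRel G.Adj]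

theorem card_of_mem_apexCone {e : Finset (β ⊕ ι)} (he : e ∈ apexCone G ι) : e.card = 3 := by
  simp only [apexCone, mem_union, mem_map, mem_powersetCard, mem_image, mem_product,
    SimpleGraph.mem_edgeFinset] at he
  rcases he with ⟨t, ⟨-, ht⟩, rfl⟩ | ⟨⟨i, z⟩, ⟨-, hz⟩, rfl⟩
  · simpa using ht
  · induction z using Sym2.ind with | _ a b => ?_
    rw [apexTriple_mk, card_insert_of_notMem (by simp), card_pair (by simpa using hz.ne)]

theorem card_apexCone :
    (apexCone G ι).card = (Fintype.card β).choose 3 + Fintype.card ι * G.edgeFinset.card := by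
  rw [apexCone, card_union_of_disjoint, card_map, card_powersetCard, card_univ,
    card_image_of_injective _ apexTriple_injective, card_product, card_univ]
  rw [disjoint_left]
  simp only [mem_map, mem_image]
  rintro _ ⟨t, -, rfl⟩ ⟨⟨i, z⟩, -, h⟩
  have hi : Sum.inr i ∈ apexTriple i z := mem_insert_self _ _
  simp [h] at hi

theorem exists_adj_of_insert_inr_mem_apexCone {i : ι} {x y : β ⊕ ι}
    (h : {Sum.inr i, x, y} ∈ apexCone G ι) :
    ∃ a b, x = .inl a ∧ y = .inl b ∧ G.Adj a b := by
  simp only [apexCone, mem_union, mem_map, mem_image, mem_product,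
    SimpleGraph.mem_edgeFinset] at h
  rcases h with ⟨t, -, ht⟩ | ⟨⟨j, z⟩, ⟨-, hz⟩, hjz⟩
  · have hi : Sum.inr i ∈ ({.inr i, x, y} : Finset (β ⊕ ι)) := mem_insert_self _ _
    simp [← ht] at hi
  induction z using Sym2.ind with | _ a b => ?_
  rw [apexTriple_mk] at hjz
  have hmem : ∀ c, Sum.inl c ∈ ({.inr j, .inl a, .inl b} : Finset (β ⊕ ι)) →
      Sum.inl c = x ∨ Sum.inl c = y := by
    intro c hc
    simpa [hjz] using hc
  rcases hmem a (by simp) with rfl | rfl <;> rcases hmem b (by simp) with hb | hb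
  · exact absurd (Sum.inl_injective hb) hz.ne'
  · exact ⟨a, b, rfl, hb.symm, hz⟩
  · exact ⟨b, a, hb.symm, rfl, hz.symm⟩
  · exact absurd (Sum.inl_injective hb) hz.ne'

end ApexCone

theorem not_cliqueFree_of_pairwise_adj {β : Type*} {G : SimpleGraph β} {n : ℕ} (g : Fin n → β)
    (hg : Pairwise fun t t' => G.Adj (g t) (g t')) : ¬ G.CliqueFree n := by
  rw [SimpleGraph.not_cliqueFree_iff_top_isContained]
  exact ⟨⟨⟨g, fun h => hg h⟩, fun t t' h => by_contra fun hne => (hg hne).ne h⟩⟩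

theorem not_contains3_apexCone {β ι : Type*} [Fintype β] [DecidableEq β] [Fintype ι]
    [DecidableEq ι] {G : SimpleGraph β} [DecidableRel G.Adj] (hG : G.CliqueFree 4)
    (hι : 1 < Fintype.card ι) {s : ℕ} (hcard : Fintype.card β + Fintype.card ι = 5 * s + 1)
    (i₁ : Fin s) (u v : Fin 5) :
    ¬ Contains3 (apexCone G ι : Set (Finset (β ⊕ ι))) (HEdges s i₁ u v) := by
  rintro ⟨f, hf, hmap⟩
  have hsurj : Function.Surjective f :=
    ((Fintype.bijective_iff_injective_and_card f).mpr ⟨hf, by simp [hcard, mul_comm]⟩).2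
  obtain ⟨c, k, hck⟩ : ∃ c k, f (some c) = .inr k := by
    obtain ⟨i, j, hij⟩ := Fintype.exists_pair_of_one_lt_card hι
    obtain ⟨_ | c, hc⟩ := hsurj (.inr i)
    · obtain ⟨_ | c', hc'⟩ := hsurj (.inr j)
      · exact absurd (Sum.inr_injective (hc.symm.trans hc')) hij
      · exact ⟨c', j, hc'⟩
    · exact ⟨c, i, hc⟩
  obtain ⟨r, l⟩ := c
  have hadj : ∀ t t' : Fin 4, t ≠ t' → ∃ a b, f (some (r, l.succAbove t)) = .inl a ∧
      f (some (r, l.succAbove t')) = .inl b ∧ G.Adj a b := by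
    intro t t' htt'
    apply exists_adj_of_insert_inr_mem_apexCone (i := k)
    have := hmap _ (triple_mem_HEdges (i₁ := i₁) (u := u) (v := v) r (l.succAbove_ne t).symm
      (l.succAbove_ne t').symm (l.succAbove_right_injective.ne htt'))
    simpa [image_insert, hck] using this
  have hleft : ∀ t : Fin 4, ∃ a, f (some (r, l.succAbove t)) = .inl a := fun t =>
    let ⟨a, _, ha, _⟩ := hadj t (t + 1) (by revert t; decide)
    ⟨a, ha⟩
  choose g hg using hleft
  refine not_cliqueFree_of_pairwise_adj g (fun t t' htt' => ?_) hG
  obtain ⟨a, b, ha, hb, hab⟩ := hadj t t' htt'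
  rwa [← Sum.inl_injective ((hg t).symm.trans ha),
    ← Sum.inl_injective ((hg t').symm.trans hb)] at hab

theorem two_mul_choose_two_le_three_mul_card_edgeFinset_turanGraph (n : ℕ) :
    2 * n.choose 2 ≤ 3 * #(SimpleGraph.turanGraph n 3).edgeFinset := by
  induction n using Nat.strong_induction_on with | _ n ih => ?_
  rcases lt_or_ge n 3 with hn | hn
  · have htop : #(SimpleGraph.turanGraph n 3).edgeFinset = n.choose 2 := by
      have := SimpleGraph.card_edgeFinset_top_eq_card_choose_two (V := Fin n)
      rw [Fintype.card_fin] at this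
      convert! this
      exact SimpleGraph.turanGraph_eq_top.mpr (Or.inr hn.le)
    omega
  · obtain ⟨k, rfl⟩ : ∃ k, n = k + 3 := ⟨n - 3, by omega⟩
    have hchoose : (k + 3).choose 2 = k.choose 2 + 3 * k + 3 := by
      simp [Nat.choose_succ_succ']
      ring
    have := ih k (by omega)
    rw [SimpleGraph.card_edgeFinset_turanGraph_add, hchoose, show (3 : ℕ).choose 2 = 3 by rfl]
    omega

theorem choose_add_le_ex3_HEdges {s m : ℕ} (hcard : m + 2 = 5 * s + 1) (i₁ : Fin s)
    (u v : Fin 5) :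
    (m.choose 3 : ℝ) + 4 / 3 * m.choose 2 ≤ ex3 (m + 2) (HEdges s i₁ u v) := by
  have hfree := not_contains3_apexCone (G := SimpleGraph.turanGraph m 3) (ι := Fin 2)
    (SimpleGraph.turanGraph_cliqueFree three_pos) (by simp) (by simpa using hcard) i₁ u v
  have hcone := ncard_le_ex3 finSumFinEquiv (fun _ => card_of_mem_apexCone) hfree
  rw [Set.ncard_coe_finset, card_apexCone, Fintype.card_fin, Fintype.card_fin] at hcone
  have hturan := two_mul_choose_two_le_three_mul_card_edgeFinset_turanGraph m
  have key : (3 * m.choose 3 + 4 * m.choose 2 : ℝ) ≤ 3 * ex3 (m + 2) (HEdges s i₁ u v) := by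
    exact_mod_cast (by omega : 3 * m.choose 3 + 4 * m.choose 2 ≤ 3 * ex3 (m + 2) _)
  linarith

theorem hypergraph_counterexample :
    ∃ s₀ : ℕ, ∀ s : ℕ, s₀ ≤ s → ∀ n : ℕ, n = 1 + 5 * s →
      ∀ (i₁ : Fin s) (u v : Fin 5), u ≠ v →
        exLinks (n - 1) (HEdges s i₁ u v) = 0 ∧
        ((n - 2).choose 3 : ℝ) + 4 / 3 * (n - 2).choose 2 =
          ((n - 1).choose 3 : ℝ) + 1 / 3 * (n - 2).choose 2 ∧
        ((n - 2).choose 3 : ℝ) + 4 / 3 * (n - 2).choose 2 ≤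
          (ex3 n (HEdges s i₁ u v) : ℝ) ∧
        ((n - 1).choose 3 : ℝ) + (exLinks (n - 1) (HEdges s i₁ u v) : ℝ) <
          (ex3 n (HEdges s i₁ u v) : ℝ) := by
  refine ⟨1, fun s hs n hn i₁ u v huv => ?_⟩
  obtain ⟨m, rfl⟩ : ∃ m, n = m + 2 := ⟨n - 2, by omega⟩
  rw [Nat.add_sub_cancel, show m + 2 - 1 = m + 1 by omega]
  have hlinks : exLinks (m + 1) (HEdges s i₁ u v) = 0 :=
    exLinks_eq_zero (hlink := fun _ _ => link_HEdges_none_adj) (by simp; omega)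
      (by simpa using huv)
  have hex3 := choose_add_le_ex3_HEdges (m := m) (by omega) i₁ u v
  have hpascal : ((m + 1).choose 3 : ℝ) = m.choose 3 + m.choose 2 := by
    rw [Nat.choose_succ_succ', Nat.cast_add, add_comm]
  have hpos : (0 : ℝ) < m.choose 2 := by exact_mod_cast Nat.choose_pos (by omega)
  refine ⟨hlinks, by rw [hpascal]; ring, hex3, ?_⟩
  rw [hlinks, hpascal, Nat.cast_zero]
  linarith
end

section
/- There exists s₀ such that for every integer s ≥ s₀ the following holds. Let n = 1 + 5s, let H be the 3-uniform hypergraph described in the context, and let T be the 3-uniform hypergraph on a vertex set U ∪ {x,y} with |U| = n−2, where U = U_1 ∪ U_2 ∪ U_3 is a partition into three parts of sizes ⌊(n−2)/3⌋ or ⌈(n−2)/3⌉, and whose edges are all 3-element subsets of U together with all triples {x, u_i, u_j} and {y, u_i, u_j} for 1 ≤ i < j ≤ 3, u_i ∈ U_i, u_j ∈ U_j. Then T contains no copy of H. -/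
/-- The edges of the 3-uniform hypergraph `T` on `U ∪ {x, y}`, where `Sum.inl a` are the
vertices of `U` (partitioned into the three parts `U₁, U₂, U₃` by `p`) and
`Sum.inr true = x`, `Sum.inr false = y`: all 3-element subsets of `U`, together with all
triples consisting of `x` or `y` and two vertices of `U` lying in different parts. -/
def TEdges (m : ℕ) (p : Fin m → Fin 3) : Set (Finset (Fin m ⊕ Bool)) :=
  {e | (e.card = 3 ∧ ∀ w ∈ e, ∃ a : Fin m, w = Sum.inl a) ∨
       (∃ z : Bool, ∃ a b : Fin m, p a ≠ p b ∧ e = {Sum.inr z, Sum.inl a, Sum.inl b})}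

/-!
`U` has only `5s - 1` vertices, so any embedding of `H` into `T` sends some vertex `w` of some
`Vᵢ` to `x` or `y`. Every triple of `Vᵢ` through `w` is an edge of `H`, so the other four vertices
of `Vᵢ` land in `U` and pairwise in different parts of the partition `U₁ ∪ U₂ ∪ U₃`,
which is impossible.
-/

open Finset

lemma exists_apply_eq_inr_of_card_lt {α β γ : Type*} [Fintype α] [Fintype β]
    {f : β → α ⊕ γ} (hf : Function.Injective f) (hcard : Fintype.card α < Fintype.card β) :
    ∃ b z, f b = Sum.inr z := by
  by_contra! h
  have hleft (b : β) : (f b).isLeft := by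
    cases hfb : f b with
    | inl a => rfl
    | inr z => exact absurd hfb (h b z)
  have hinj : Function.Injective fun b => (f b).getLeft (hleft b) := by
    intro b₁ b₂ hb
    apply hf
    rw [← Sum.inl_getLeft (f b₁) (hleft b₁), ← Sum.inl_getLeft (f b₂) (hleft b₂)]
    exact congrArg Sum.inl hb
  exact hcard.not_ge (Fintype.card_le_of_injective _ hinj)

lemma triple_mem_HEdges_s14 {s : ℕ} (i₁ : Fin s) (u v : Fin 5) (i : Fin s) {j₁ j₂ j₃ : Fin 5}
    (h₁₂ : j₁ ≠ j₂) (h₁₃ : j₁ ≠ j₃) (h₂₃ : j₂ ≠ j₃) :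
    {some (i, j₁), some (i, j₂), some (i, j₃)} ∈ HEdges s i₁ u v := by
  refine Or.inl ⟨card_eq_three.mpr ⟨_, _, _, ?_, ?_, ?_, rfl⟩, i, ?_⟩
  · simpa using h₁₂
  · simpa using h₁₃
  · simpa using h₂₃
  · simp only [mem_insert, mem_singleton]
    rintro w (rfl | rfl | rfl) <;> exact ⟨_, rfl⟩

lemma TEdges.exists_parts_ne {m : ℕ} {p : Fin m → Fin 3} {z : Bool} {w₁ w₂ : Fin m ⊕ Bool}
    (he : {Sum.inr z, w₁, w₂} ∈ TEdges m p) (h₁ : w₁ ≠ Sum.inr z) (h₂ : w₂ ≠ Sum.inr z)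
    (h₁₂ : w₁ ≠ w₂) : ∃ a b, w₁ = Sum.inl a ∧ w₂ = Sum.inl b ∧ p a ≠ p b := by
  rcases he with ⟨-, hU⟩ | ⟨z', a, b, hab, he⟩
  · obtain ⟨a, ha⟩ := hU (Sum.inr z) (by simp)
    exact absurd ha Sum.inr_ne_inl
  · have hmem (w) (hw : w ∈ ({Sum.inr z, w₁, w₂} : Finset (Fin m ⊕ Bool))) :
        w = Sum.inr z' ∨ w = Sum.inl a ∨ w = Sum.inl b := by
      rw [he] at hw
      simpa only [mem_insert, mem_singleton] using hw
    obtain rfl : z = z' := by simpa using hmem (Sum.inr z) (by simp)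
    have hw₁ := hmem w₁ (by simp)
    have hw₂ := hmem w₂ (by simp)
    rcases hw₁ with rfl | rfl | rfl <;> rcases hw₂ with rfl | rfl | rfl <;>
      first
      | exact absurd rfl ‹_›
      | exact ⟨_, _, rfl, rfl, hab⟩
      | exact ⟨_, _, rfl, rfl, hab.symm⟩

/-- The link of `x` (or `y`) in `T` is a complete 3-partite graph, so its cliques have at most
three vertices. -/
lemma TEdges.card_le_three_of_link {m : ℕ} {p : Fin m → Fin 3} {z : Bool}
    {S : Finset (Fin m ⊕ Bool)} (hz : Sum.inr z ∉ S)
    (hS : ∀ w₁ ∈ S, ∀ w₂ ∈ S, w₁ ≠ w₂ → {Sum.inr z, w₁, w₂} ∈ TEdges m p) : S.card ≤ 3 := by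
  have hinj : Set.InjOn (Sum.elim p fun _ => 0) (S : Set (Fin m ⊕ Bool)) := by
    intro w₁ hw₁ w₂ hw₂ hpart
    by_contra h₁₂
    obtain ⟨a, b, rfl, rfl, hab⟩ := TEdges.exists_parts_ne (hS w₁ hw₁ w₂ hw₂ h₁₂)
      (ne_of_mem_of_not_mem hw₁ hz) (ne_of_mem_of_not_mem hw₂ hz) h₁₂
    exact hab hpart
  simpa using card_le_card_of_injOn _ (fun _ _ => mem_univ _) hinj

theorem T_contains_no_copy_of_H :
    ∃ s₀ : ℕ, ∀ s : ℕ, s₀ ≤ s → ∀ n : ℕ, n = 1 + 5 * s →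
      ∀ p : Fin (n - 2) → Fin 3,
        -- the three parts have sizes `⌊(n-2)/3⌋` or `⌈(n-2)/3⌉`:
        (∀ t : Fin 3,
          (n - 2) / 3 ≤ (Finset.univ.filter (fun a => p a = t)).card ∧
          (Finset.univ.filter (fun a => p a = t)).card ≤ (n - 2 + 2) / 3) →
        ∀ (i₁ : Fin s) (u v : Fin 5), u ≠ v →
          ¬ Contains3 (TEdges (n - 2) p) (HEdges s i₁ u v) := by
  refine ⟨1, fun s hs n hn p _ i₁ u v _ ⟨f, hf, hmap⟩ => ?_⟩
  obtain ⟨⟨i, j⟩, z, hz⟩ := exists_apply_eq_inr_of_card_lt (β := Fin s × Fin 5)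
    (hf.comp (Option.some_injective _))
    (by simp only [Fintype.card_fin, Fintype.card_prod]; omega)
  replace hz : f (some (i, j)) = Sum.inr z := hz
  set g : Fin 5 → Fin (n - 2) ⊕ Bool := fun j' => f (some (i, j'))
  have hg : Function.Injective g :=
    hf.comp <| (Option.some_injective _).comp (Prod.mk_right_injective i)
  have hz_notMem : Sum.inr z ∉ (univ.erase j).image g := by
    rw [← hz, hg.mem_finset_image]
    exact notMem_erase j univ
  have hlink : ∀ w₁ ∈ (univ.erase j).image g, ∀ w₂ ∈ (univ.erase j).image g, w₁ ≠ w₂ →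
      {Sum.inr z, w₁, w₂} ∈ TEdges (n - 2) p := by
    simp only [mem_image, mem_erase, mem_univ, and_true]
    rintro _ ⟨j₁, hj₁, rfl⟩ _ ⟨j₂, hj₂, rfl⟩ h₁₂
    have hedge := hmap _ <|
      triple_mem_HEdges_s14 i₁ u v i (Ne.symm hj₁) (Ne.symm hj₂) (ne_of_apply_ne g h₁₂)
    rw [← hz]
    simpa only [image_insert, image_singleton] using hedge
  have hcard := TEdges.card_le_three_of_link hz_notMem hlink
  rw [card_image_of_injective _ hg, card_erase_of_mem (mem_univ j)] at hcard
  simp at hcard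
end
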